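/- arXiv:math/9802052 — 5 statements merged into one kernel-verified Lean document; each statement's English description precedes it below -/
import Mathlib

section
/- Let $K \subseteq \mathbb{R}^r$ be a full-dimensional pointed rational polyhedral cone generated by lattice points $e_1,\dots,e_d$, let $T$ be a triangulation of $K$ into simplicial cones of dimension $r$ spanned by subsets of $\{e_i\}$, and let $\xi \in \mathrm{int}(K)$ be a vector not lying in any hyperplane spanned by $r-1$ of the $e_i$. For each maximal simplex $I \in T$ write $\xi = \sum_{i \in I} \beta_{I,i} e_i$ (all $\beta_{I,i} \neq 0$), and define $B_{I,\xi}$ as the set of lattice points $b = \sum_{i \in I} \gamma_i e_i$ with $0 < \gamma_i \leq 1$ when $\beta_{I,i} < 0$ and $0 \leq \gamma_i < 1$ when $\beta_{I,i} > 0$. Then $K \cap \mathbb{Z}^r$ is the disjoint union over maximal $I \in T$ and $b \in B_{I,\xi}$ of the sets $b + \sum_{i \in I} \mathbb{Z}_{\geq 0} e_i$. -/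
open Finset

/-- embedding of the lattice `ℤ^r` into `ℝ^r` -/
noncomputable def toR {r : ℕ} (n : Fin r → ℤ) : Fin r → ℝ := fun i => (n i : ℝ)

/-- the closed convex cone generated by the vectors `e i` for `i ∈ I` -/
def coneOn {r d : ℕ} (e : Fin d → (Fin r → ℝ)) (I : Finset (Fin d)) : Set (Fin r → ℝ) :=
  {x | ∃ c : Fin d → ℝ, (∀ i, 0 ≤ c i) ∧ x = ∑ i ∈ I, c i • e i}

/-- the open convex cone generated by the vectors `e i` for `i ∈ I` -/
def openConeOn {r d : ℕ} (e : Fin d → (Fin r → ℝ)) (I : Finset (Fin d)) : Set (Fin r → ℝ) :=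
  {x | ∃ c : Fin d → ℝ, (∀ i ∈ I, 0 < c i) ∧ x = ∑ i ∈ I, c i • e i}

/-- `T` is a triangulation of the cone `K` into maximal (`r`-dimensional) simplicial
cones spanned by subsets of the generators `e i`: each member is a simplex of dimension
`r`, the simplicial cones cover `K`, and the corresponding open cones are disjoint. -/
def IsTriangulation {r d : ℕ} (e : Fin d → (Fin r → ℝ)) (K : Set (Fin r → ℝ))
    (T : Finset (Finset (Fin d))) : Prop :=
  (∀ I ∈ T, I.card = r ∧ LinearIndependent ℝ (fun i : I => e i)) ∧
  (⋃ I ∈ T, coneOn e I) = K ∧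
  (∀ I ∈ T, ∀ J ∈ T, ∀ x, x ∈ openConeOn e I → x ∈ openConeOn e J → I = J)

/-- membership in the half-open box `B_{I,ξ}` attached to a maximal simplex `I` and the
coordinate vector `β` of the generic vector `ξ` in the simplex `I`: the coordinate
`γ i` of `b` lies in `(0,1]` when `β i < 0` and in `[0,1)` when `β i > 0`.
(The box `B_{I,-ξ}` is `inBox e I (-β) b`.) -/
def inBox {r d : ℕ} (e : Fin d → (Fin r → ℝ)) (I : Finset (Fin d)) (β : Fin d → ℝ)
    (b : Fin r → ℤ) : Prop :=
  ∃ γ : Fin d → ℝ, toR b = ∑ i ∈ I, γ i • e i ∧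
    ∀ i ∈ I, (β i < 0 → 0 < γ i ∧ γ i ≤ 1) ∧ (0 < β i → 0 ≤ γ i ∧ γ i < 1)

/-! ### Auxiliary lemmas -/

lemma toR_sub {r : ℕ} (a b : Fin r → ℤ) : toR (a - b) = toR a - toR b := by
  funext j; simp [toR]

lemma toR_add {r : ℕ} (a b : Fin r → ℤ) : toR (a + b) = toR a + toR b := by
  funext j; simp [toR]

lemma toR_zsum {r d : ℕ} (eZ : Fin d → (Fin r → ℤ)) (I : Finset (Fin d)) (M : Fin d → ℤ) :
    toR (∑ i ∈ I, M i • eZ i) = ∑ i ∈ I, (M i : ℝ) • toR (eZ i) := by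
  funext j
  simp only [toR, Finset.sum_apply, Pi.smul_apply, smul_eq_mul]
  push_cast
  rfl

lemma coef_eq {r d : ℕ} {e : Fin d → (Fin r → ℝ)} {I : Finset (Fin d)}
    (hLI : LinearIndependent ℝ (fun i : I => e i)) {c c' : Fin d → ℝ}
    (h : ∑ i ∈ I, c i • e i = ∑ i ∈ I, c' i • e i) : ∀ i ∈ I, c i = c' i := by
  have h2 := Fintype.linearIndependent_iff.mp hLI (fun i => c i.1 - c' i.1) ?_
  · intro i hi
    have := h2 ⟨i, hi⟩
    simpa [sub_eq_zero] using this
  · have : ∑ i : I, (c i.1 - c' i.1) • e i.1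
        = ∑ i ∈ I, c i • e i - ∑ i ∈ I, c' i • e i := by
      rw [← Finset.sum_coe_sort I (fun i => c i • e i),
        ← Finset.sum_coe_sort I (fun i => c' i • e i), ← Finset.sum_sub_distrib]
      exact Finset.sum_congr rfl fun i _ => by rw [sub_smul]
    rw [this, h, sub_self]

lemma sum_mem_span {r d : ℕ} (e : Fin d → (Fin r → ℝ)) (I : Finset (Fin d)) (c : Fin d → ℝ) :
    ∑ i ∈ I, c i • e i ∈ Submodule.span ℝ (Set.range fun i : I => e i.1) := by
  rw [← Finset.sum_coe_sort I (fun i => c i • e i)]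
  exact Submodule.sum_mem _ fun i _ =>
    Submodule.smul_mem _ _ (Submodule.subset_span ⟨i, rfl⟩)

lemma exists_rep {r d : ℕ} {e : Fin d → (Fin r → ℝ)} {I : Finset (Fin d)} {x : Fin r → ℝ}
    (hx : x ∈ Submodule.span ℝ (Set.range fun i : I => e i.1)) :
    ∃ c : Fin d → ℝ, x = ∑ i ∈ I, c i • e i := by
  obtain ⟨c, hc⟩ := (Submodule.mem_span_range_iff_exists_fun ℝ).mp hx
  refine ⟨fun i => if h : i ∈ I then c ⟨i, h⟩ else 0, ?_⟩
  rw [← Finset.sum_coe_sort I (fun i => _ • e i)]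
  rw [← hc]
  exact Finset.sum_congr rfl fun i _ => by simp

lemma combine_sum {r d : ℕ} (e : Fin d → Fin r → ℝ) (I : Finset (Fin d)) (a b : Fin d → ℝ)
    (ε : ℝ) :
    (∑ i ∈ I, a i • e i) + ε • (∑ i ∈ I, b i • e i) = ∑ i ∈ I, (a i + ε * b i) • e i := by
  rw [Finset.smul_sum, ← Finset.sum_add_distrib]
  exact Finset.sum_congr rfl fun i _ => by rw [smul_smul, ← add_smul]

lemma mem_open_eventually {r d : ℕ} (e : Fin d → Fin r → ℝ) (I : Finset (Fin d))
    (β γ : Fin d → ℝ) (m : Fin d → ℕ) (ξ x : Fin r → ℝ)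
    (hx : x = ∑ i ∈ I, (γ i + m i) • e i) (hξ : ξ = ∑ i ∈ I, β i • e i)
    (hγ : ∀ i ∈ I, (β i < 0 → 0 < γ i ∧ γ i ≤ 1) ∧ (0 < β i → 0 ≤ γ i ∧ γ i < 1))
    (hβne : ∀ i ∈ I, β i ≠ 0) :
    ∀ᶠ ε in nhdsWithin 0 (Set.Ioi (0:ℝ)), x + ε • ξ ∈ openConeOn e I := by
  have hall : ∀ i ∈ I, ∀ᶠ ε in nhdsWithin 0 (Set.Ioi (0:ℝ)),
      0 < γ i + m i + ε * β i := by
    intro i hi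
    rcases (hβne i hi).lt_or_gt with hb | hb
    · have h1 := ((hγ i hi).1 hb).1
      have h2 : (0:ℝ) ≤ m i := Nat.cast_nonneg _
      have ha : 0 < γ i + m i := by linarith
      have hev : Set.Ioo (0:ℝ) ((γ i + m i) / (-β i)) ∈ nhdsWithin 0 (Set.Ioi (0:ℝ)) :=
        Ioo_mem_nhdsGT_of_mem ⟨le_refl 0, div_pos ha (by linarith)⟩
      filter_upwards [hev] with ε hε
      have h3 : ε * (-β i) < γ i + m i := (lt_div_iff₀ (by linarith)).mp hε.2
      linarith
    · have h1 := ((hγ i hi).2 hb).1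
      have h2 : (0:ℝ) ≤ m i := Nat.cast_nonneg _
      filter_upwards [self_mem_nhdsWithin] with ε hε
      have hε' : 0 < ε := hε
      nlinarith
  filter_upwards [(Finset.eventually_all I).mpr hall] with ε hε
  exact ⟨fun i => γ i + m i + ε * β i, hε, by rw [hx, hξ, combine_sum]⟩

lemma rep_of_eq {r d : ℕ} (eZ : Fin d → (Fin r → ℤ)) (e : Fin d → (Fin r → ℝ))
    (he : e = fun i => toR (eZ i)) (I : Finset (Fin d)) (n b : Fin r → ℤ) (m : Fin d → ℕ)
    (γ : Fin d → ℝ) (hb : toR b = ∑ i ∈ I, γ i • e i)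
    (hrep : n = b + ∑ i ∈ I, (m i : ℤ) • eZ i) :
    toR n = ∑ i ∈ I, (γ i + m i) • e i := by
  have heZ : ∀ i, toR (eZ i) = e i := fun i => by rw [he]
  have h1 : toR n = toR b + toR (∑ i ∈ I, ((m i : ℤ)) • eZ i) := by rw [hrep, toR_add]
  rw [h1, hb, toR_zsum, ← Finset.sum_add_distrib]
  refine Finset.sum_congr rfl fun i _ => ?_
  rw [heZ, ← add_smul]
  push_cast
  ring_nf

/-- Uniqueness part: two admissible triples representing the same lattice point agree. -/
lemma uniq_aux {r d : ℕ} (eZ : Fin d → (Fin r → ℤ)) (e : Fin d → (Fin r → ℝ))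
    (he : e = fun i => toR (eZ i)) (T : Finset (Finset (Fin d)))
    (hLI : ∀ I ∈ T, LinearIndependent ℝ (fun i : I => e i.1))
    (hdisj : ∀ I ∈ T, ∀ J ∈ T, ∀ x, x ∈ openConeOn e I → x ∈ openConeOn e J → I = J)
    (ξ : Fin r → ℝ) (β : Finset (Fin d) → Fin d → ℝ)
    (hβ : ∀ I ∈ T, ξ = ∑ i ∈ I, β I i • e i)
    (hβne : ∀ I ∈ T, ∀ i ∈ I, β I i ≠ 0) (n : Fin r → ℤ)
    (p q : Finset (Fin d) × (Fin r → ℤ) × (Fin d → ℕ))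
    (hp : p.1 ∈ T ∧ inBox e p.1 (β p.1) p.2.1 ∧ (∀ i ∉ p.1, p.2.2 i = 0) ∧
        n = p.2.1 + ∑ i ∈ p.1, (p.2.2 i : ℤ) • eZ i)
    (hq : q.1 ∈ T ∧ inBox e q.1 (β q.1) q.2.1 ∧ (∀ i ∉ q.1, q.2.2 i = 0) ∧
        n = q.2.1 + ∑ i ∈ q.1, (q.2.2 i : ℤ) • eZ i) :
    p = q := by
  obtain ⟨I, b, m⟩ := p
  obtain ⟨J, b', m'⟩ := q
  obtain ⟨hIT, ⟨γ, hγs, hγb⟩, hm0, hr⟩ := hp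
  obtain ⟨hJT, ⟨γ', hγ's, hγ'b⟩, hm'0, hr'⟩ := hq
  simp only at hγs hγb hm0 hr hγ's hγ'b hm'0 hr' ⊢
  have hxp := rep_of_eq eZ e he I n b m γ hγs hr
  have hxq := rep_of_eq eZ e he J n b' m' γ' hγ's hr'
  have hevp := mem_open_eventually e I (β I) γ m ξ (toR n) hxp (hβ I hIT) hγb (hβne I hIT)
  have hevq := mem_open_eventually e J (β J) γ' m' ξ (toR n) hxq (hβ J hJT) hγ'b (hβne J hJT)
  obtain ⟨ε, h1, h2⟩ := (hevp.and hevq).exists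
  have hIJ : I = J := hdisj I hIT J hJT _ h1 h2
  subst hIJ
  have hc : ∀ i ∈ I, γ i + (m i : ℝ) = γ' i + (m' i : ℝ) :=
    coef_eq (hLI I hIT) (hxp.symm.trans hxq)
  have hm : m = m' := by
    funext i
    by_cases hi : i ∈ I
    · have h := hc i hi
      have hbnd : |γ i - γ' i| < 1 := by
        rcases (hβne I hIT i hi).lt_or_gt with hb | hb
        · obtain ⟨a1, a2⟩ := (hγb i hi).1 hb
          obtain ⟨a3, a4⟩ := (hγ'b i hi).1 hb
          rw [abs_lt]; constructor <;> linarith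
        · obtain ⟨a1, a2⟩ := (hγb i hi).2 hb
          obtain ⟨a3, a4⟩ := (hγ'b i hi).2 hb
          rw [abs_lt]; constructor <;> linarith
      have hz : ((m i : ℤ) - (m' i : ℤ)) = 0 := by
        have hcast : |(((m i : ℤ) - (m' i : ℤ) : ℤ) : ℝ)| < 1 := by
          push_cast
          have : (m i : ℝ) - (m' i : ℝ) = γ' i - γ i := by linarith
          rw [this, abs_sub_comm]
          exact hbnd
        have h8 := abs_lt.mp (show |((m i : ℤ) - (m' i : ℤ))| < 1 by exact_mod_cast hcast)
        omega
      omega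
    · rw [hm0 i hi, hm'0 i hi]
  subst hm
  have hb : b = b' := by
    have := hr.symm.trans hr'
    exact add_right_cancel this
  rw [hb]

/-- Proposition 1(a): with `T` a triangulation of the full-dimensional
pointed cone `K ⊆ ℝ^r` on lattice generators `e i`, and `ξ` a generic interior vector
with coordinates `β I i ≠ 0` in each maximal simplex `I ∈ T`, the lattice points of `K`
are the disjoint union over `I ∈ T` and `b ∈ B_{I,ξ}` of the sets
`b + ∑_{i ∈ I} ℤ_{≥0} e i`; i.e. each `n ∈ K ∩ ℤ^r` has a unique such representation,
and conversely any point with such a representation lies in `K`. -/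
theorem stmt1 (r d : ℕ) (eZ : Fin d → (Fin r → ℤ)) (K : Set (Fin r → ℝ))
    (e : Fin d → (Fin r → ℝ)) (he : e = fun i => toR (eZ i))
    (hK : K = coneOn e Finset.univ)
    (hpointed : K ∩ (-K) = {0})
    (hfull : Submodule.span ℝ K = ⊤)
    (T : Finset (Finset (Fin d))) (hT : IsTriangulation e K T)
    (ξ : Fin r → ℝ) (hξ : ξ ∈ interior K)
    (β : Finset (Fin d) → Fin d → ℝ)
    (hβ : ∀ I ∈ T, ξ = ∑ i ∈ I, β I i • e i)
    (hβne : ∀ I ∈ T, ∀ i ∈ I, β I i ≠ 0) :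
    ∀ n : Fin r → ℤ, toR n ∈ K ↔
      ∃! p : Finset (Fin d) × (Fin r → ℤ) × (Fin d → ℕ),
        p.1 ∈ T ∧ inBox e p.1 (β p.1) p.2.1 ∧ (∀ i ∉ p.1, p.2.2 i = 0) ∧
        n = p.2.1 + ∑ i ∈ p.1, (p.2.2 i : ℤ) • eZ i := by
  obtain ⟨hTcard, hTcover, hTdisj⟩ := hT
  have hLIall : ∀ I ∈ T, LinearIndependent ℝ (fun i : I => e i.1) :=
    fun I hI => (hTcard I hI).2
  intro n
  constructor
  · -- existence (plus uniqueness from uniq_aux)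
    intro hxK
    have hξK : ξ ∈ K := interior_subset hξ
    -- the shifted points lie in K
    have hshift : ∀ ε : ℝ, 0 ≤ ε → toR n + ε • ξ ∈ K := by
      rw [hK] at hxK hξK ⊢
      obtain ⟨a, ha0, hax⟩ := hxK
      obtain ⟨s, hs0, hsx⟩ := hξK
      intro ε hε
      exact ⟨fun i => a i + ε * s i,
        fun i => add_nonneg (ha0 i) (mul_nonneg hε (hs0 i)),
        by rw [hax, hsx, combine_sum]⟩
    -- for each k, pick a simplex containing the shifted point
    have hpick : ∀ k : ℕ, ∃ I ∈ T, toR n + (1 / ((k : ℝ) + 1)) • ξ ∈ coneOn e I := by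
      intro k
      have hεk : (0:ℝ) ≤ 1 / ((k : ℝ) + 1) := by positivity
      have := hshift _ hεk
      rw [← hTcover] at this
      simpa using this
    choose g hgT hgmem using hpick
    let g' : ℕ → {I // I ∈ T} := fun k => ⟨g k, hgT k⟩
    obtain ⟨y, hinf⟩ := Finite.exists_infinite_fiber g'
    obtain ⟨I, hIT⟩ := y
    set S : Set ℕ := g' ⁻¹' {⟨I, hIT⟩} with hSdef
    have hS : S.Infinite := Set.infinite_coe_iff.mp hinf
    have hmem : ∀ k ∈ S, toR n + (1 / ((k : ℝ) + 1)) • ξ ∈ coneOn e I := by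
      intro k hk
      have hgk : g k = I := congrArg Subtype.val hk
      have := hgmem k
      rwa [hgk] at this
    have hLI := hLIall I hIT
    have hξrep := hβ I hIT
    obtain ⟨k₀, hk₀⟩ := hS.nonempty
    -- toR n lies in the span of the simplex
    have hx_span : toR n ∈ Submodule.span ℝ (Set.range fun i : I => e i.1) := by
      obtain ⟨c, hc0, hceq⟩ := hmem k₀ hk₀
      have h1 : toR n + (1 / ((k₀ : ℝ) + 1)) • ξ
          ∈ Submodule.span ℝ (Set.range fun i : I => e i.1) := by
        rw [hceq]; exact sum_mem_span e I c
      have h2 : ξ ∈ Submodule.span ℝ (Set.range fun i : I => e i.1) := by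
        rw [hξrep]; exact sum_mem_span e I _
      have h3 := Submodule.sub_mem _ h1 (Submodule.smul_mem _ (1 / ((k₀ : ℝ) + 1)) h2)
      simpa using h3
    obtain ⟨α, hαrep⟩ := exists_rep hx_span
    -- coefficient inequalities
    have hcoef : ∀ k ∈ S, ∀ i ∈ I, 0 ≤ α i + (1 / ((k : ℝ) + 1)) * β I i := by
      intro k hk i hi
      obtain ⟨c, hc0, hceq⟩ := hmem k hk
      have hsum : ∑ i ∈ I, (α i + (1 / ((k : ℝ) + 1)) * β I i) • e i = ∑ i ∈ I, c i • e i := by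
        rw [← combine_sum, ← hαrep, ← hξrep]
        exact hceq
      rw [coef_eq hLI hsum i hi]
      exact hc0 i
    have h1 : ∀ i ∈ I, 0 ≤ α i := by
      intro i hi
      by_contra hneg
      push_neg at hneg
      rcases le_or_gt (β I i) 0 with hb | hb
      · have h := hcoef k₀ hk₀ i hi
        have ht : (0:ℝ) < 1 / ((k₀ : ℝ) + 1) := by positivity
        nlinarith
      · obtain ⟨N, hN⟩ := exists_nat_gt (β I i / (-α i))
        obtain ⟨k, hkS, hkN⟩ := hS.exists_gt N
        have h := hcoef k hkS i hi
        have hk1 : β I i / (-α i) < (k : ℝ) + 1 := by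
          have hNk : (N : ℝ) ≤ (k : ℝ) := Nat.cast_le.mpr hkN.le
          linarith
        have hα : (0:ℝ) < -α i := by linarith
        have h2 : β I i < ((k : ℝ) + 1) * (-α i) := (div_lt_iff₀ hα).mp hk1
        have h3 : (0:ℝ) < (k : ℝ) + 1 := by positivity
        have h5 : 0 ≤ ((k : ℝ) + 1) * (α i + 1 / ((k : ℝ) + 1) * β I i) :=
          mul_nonneg h3.le h
        have h6 : ((k : ℝ) + 1) * (1 / ((k : ℝ) + 1) * β I i) = β I i := by
          field_simp
        rw [mul_add, h6] at h5
        nlinarith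
    have h2 : ∀ i ∈ I, β I i < 0 → 0 < α i := by
      intro i hi hb
      rcases lt_or_eq_of_le (h1 i hi) with h | h
      · exact h
      · exfalso
        have h := hcoef k₀ hk₀ i hi
        have ht : (0:ℝ) < 1 / ((k₀ : ℝ) + 1) := by positivity
        nlinarith
    -- construct the canonical triple
    set M : Fin d → ℤ := fun i => if β I i < 0 then ⌈α i⌉ - 1 else ⌊α i⌋ with hMdef
    have hM0 : ∀ i ∈ I, 0 ≤ M i := by
      intro i hi
      rw [hMdef]
      dsimp only
      split_ifs with hb
      · have := h2 i hi hb
        have := Int.ceil_pos.mpr this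
        omega
      · exact Int.floor_nonneg.mpr (h1 i hi)
    set m : Fin d → ℕ := fun i => if i ∈ I then (M i).toNat else 0 with hmdef
    set b : Fin r → ℤ := n - ∑ i ∈ I, M i • eZ i with hbdef
    have heZ : ∀ i, toR (eZ i) = e i := fun i => by rw [he]
    have hbrep : toR b = ∑ i ∈ I, (α i - (M i : ℝ)) • e i := by
      rw [hbdef, toR_sub, toR_zsum, hαrep, ← Finset.sum_sub_distrib]
      exact Finset.sum_congr rfl fun i _ => by rw [heZ, ← sub_smul]
    have hsum_m : ∑ i ∈ I, ((m i : ℤ)) • eZ i = ∑ i ∈ I, M i • eZ i := by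
      refine Finset.sum_congr rfl fun i hi => ?_
      rw [hmdef]
      dsimp only
      rw [if_pos hi, Int.toNat_of_nonneg (hM0 i hi)]
    have hcond : (I, b, m).1 ∈ T ∧ inBox e (I, b, m).1 (β (I, b, m).1) (I, b, m).2.1 ∧
        (∀ i ∉ (I, b, m).1, (I, b, m).2.2 i = 0) ∧
        n = (I, b, m).2.1 + ∑ i ∈ (I, b, m).1, (((I, b, m).2.2 i : ℤ)) • eZ i := by
      refine ⟨hIT, ⟨fun i => α i - (M i : ℝ), hbrep, ?_⟩, ?_, ?_⟩
      · intro i hi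
        constructor
        · intro hb'
          have hMv : M i = ⌈α i⌉ - 1 := by rw [hMdef]; exact if_pos hb'
          dsimp only
          rw [hMv]
          push_cast
          constructor <;> linarith [Int.ceil_lt_add_one (α i), Int.le_ceil (α i)]
        · intro hb'
          have hMv : M i = ⌊α i⌋ := by rw [hMdef]; exact if_neg (not_lt.mpr hb'.le)
          dsimp only
          rw [hMv]
          constructor <;> linarith [Int.floor_le (α i), Int.lt_floor_add_one (α i)]
      · intro i hi
        rw [hmdef]
        exact if_neg hi
      · rw [hsum_m, hbdef, sub_add_cancel]
    exact ⟨(I, b, m), hcond, fun q hq =>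
      uniq_aux eZ e he T hLIall hTdisj ξ β hβ hβne n q (I, b, m) hq hcond⟩
  · -- converse: a representation implies membership in `K`
    rintro ⟨p, ⟨hpT, ⟨γ, hγs, hγb⟩, hm0, hrep⟩, -⟩
    have hxrep := rep_of_eq eZ e he p.1 n p.2.1 p.2.2 γ hγs hrep
    rw [hK]
    refine ⟨fun i => if i ∈ p.1 then γ i + (p.2.2 i : ℝ) else 0, ?_, ?_⟩
    · intro i
      dsimp only
      split_ifs with hi
      · have hm : (0:ℝ) ≤ p.2.2 i := Nat.cast_nonneg _
        rcases (hβne p.1 hpT i hi).lt_or_gt with hb | hb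
        · have := ((hγb i hi).1 hb).1; linarith
        · have := ((hγb i hi).2 hb).1; linarith
      · exact le_refl 0
    · rw [hxrep]
      rw [show ∀ f : Fin d → ℝ, ∑ i ∈ univ, (if i ∈ p.1 then f i else 0) • e i
          = ∑ i ∈ univ, (if i ∈ p.1 then f i • e i else 0) from
        fun f => Finset.sum_congr rfl fun i _ => by split_ifs <;> simp]
      rw [Finset.sum_ite_mem, Finset.univ_inter]
end

section
/- With the notation of the lattice point decomposition (cone $K$, triangulation $T$, generic interior vector $\xi$, and box sets $B_{I,\pm\xi}$), the interior lattice points $\mathrm{int}(K) \cap \mathbb{Z}^r$ form the disjoint union over maximal simplices $I \in T$ and $b \in B_{I,-\xi}$ of the sets $b + \sum_{i \in I} \mathbb{Z}_{\geq 0} e_i$, where $B_{I,-\xi}$ is the set of lattice points $b = \sum_{i \in I} \gamma_i e_i$ with $0 < \gamma_i \leq 1$ when $\beta_{I,i} > 0$ and $0 \leq \gamma_i < 1$ when $\beta_{I,i} < 0$. -/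
open Finset

lemma coordEq {r d : ℕ} {e : Fin d → Fin r → ℝ} {I : Finset (Fin d)}
    (hli : LinearIndependent ℝ (fun i : I => e i)) {c c' : Fin d → ℝ}
    (h : ∑ i ∈ I, c i • e i = ∑ i ∈ I, c' i • e i) : ∀ i ∈ I, c i = c' i := by
  have h2 : ∑ i : I, (c i.1 - c' i.1) • e i.1 = 0 := by
    rw [Finset.sum_coe_sort I (fun i => (c i - c' i) • e i)]
    simp only [sub_smul, Finset.sum_sub_distrib, h, sub_self]
  intro i hi
  have := Fintype.linearIndependent_iff.mp hli (fun i => c i.1 - c' i.1) h2 ⟨i, hi⟩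
  simpa [sub_eq_zero] using this

lemma sub_smul_mem_openCone {r d : ℕ} {e : Fin d → Fin r → ℝ} {I : Finset (Fin d)}
    {β : Fin d → ℝ} {ξ x : Fin r → ℝ} (hξ : ξ = ∑ i ∈ I, β i • e i)
    {a : Fin d → ℝ} (hx : x = ∑ i ∈ I, a i • e i)
    (hβ0 : ∀ i ∈ I, β i ≠ 0)
    (ha : ∀ i ∈ I, 0 ≤ a i ∧ (0 < β i → 0 < a i)) :
    ∃ ε₀ : ℝ, 0 < ε₀ ∧ ∀ ε : ℝ, 0 < ε → ε ≤ ε₀ → x - ε • ξ ∈ openConeOn e I := by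
  have hsub : ∀ ε : ℝ, x - ε • ξ = ∑ i ∈ I, (a i - ε * β i) • e i := by
    intro ε
    rw [hx, hξ, Finset.smul_sum, ← Finset.sum_sub_distrib]
    exact Finset.sum_congr rfl fun i _ => by rw [smul_smul, ← sub_smul]
  have key : ∀ ε : ℝ, 0 < ε → (∀ i ∈ I, ε * β i < a i) → x - ε • ξ ∈ openConeOn e I := by
    intro ε hε hlt
    refine ⟨fun i => if i ∈ I then a i - ε * β i else 1, ?_, ?_⟩
    · intro i hi
      simp only [if_pos hi]
      linarith [hlt i hi]
    · rw [hsub ε]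
      exact Finset.sum_congr rfl fun i hi => by simp only [if_pos hi]
  by_cases hne : I.Nonempty
  · refine ⟨I.inf' hne (fun i => if 0 < β i then a i / (2 * β i) else 1), ?_, ?_⟩
    · rw [Finset.lt_inf'_iff]
      intro i hi
      split
      · next h => exact div_pos ((ha i hi).2 h) (by linarith)
      · exact one_pos
    · intro ε hε hε₀
      refine key ε hε fun i hi => ?_
      have hle : ε ≤ if 0 < β i then a i / (2 * β i) else 1 :=
        le_trans hε₀ (Finset.inf'_le _ hi)
      rcases lt_trichotomy (β i) 0 with hb | hb | hb
      · nlinarith [(ha i hi).1, mul_pos hε (neg_pos.mpr hb)]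
      · exact absurd hb (hβ0 i hi)
      · rw [if_pos hb] at hle
        have h2 : ε * (2 * β i) ≤ a i := by
          rw [← le_div_iff₀ (by linarith)]; exact hle
        nlinarith [(ha i hi).2 hb, mul_pos hε hb]
  · rw [Finset.not_nonempty_iff_eq_empty] at hne
    subst hne
    refine ⟨1, one_pos, fun ε hε _ => ⟨fun _ => 1, fun i hi => absurd hi (Finset.notMem_empty i), ?_⟩⟩
    simp [hx, hξ]

lemma interior_char_fwd {r : ℕ} {K : Set (Fin r → ℝ)} {x ξ : Fin r → ℝ}
    (hx : x ∈ interior K) : ∃ ε₀ : ℝ, 0 < ε₀ ∧ ∀ ε : ℝ, 0 < ε → ε ≤ ε₀ → x - ε • ξ ∈ K := by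
  obtain ⟨δ, hδ, hball⟩ := Metric.isOpen_iff.mp isOpen_interior x hx
  have hξn : (0:ℝ) ≤ ‖ξ‖ := norm_nonneg _
  refine ⟨δ / (2 * (‖ξ‖ + 1)), by positivity, fun ε hε hε0 => ?_⟩
  refine interior_subset (hball ?_)
  rw [Metric.mem_ball, dist_eq_norm]
  have h1 : x - ε • ξ - x = -(ε • ξ) := by abel
  rw [h1, norm_neg, norm_smul, Real.norm_eq_abs, abs_of_pos hε]
  rw [le_div_iff₀ (by positivity)] at hε0
  nlinarith

lemma interior_char_bwd {r : ℕ} {K : Set (Fin r → ℝ)}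
    (hadd : ∀ a ∈ K, ∀ b ∈ K, a + b ∈ K)
    (hsmul : ∀ t : ℝ, 0 ≤ t → ∀ a ∈ K, t • a ∈ K)
    {ξ : Fin r → ℝ} (hξ : ξ ∈ interior K) {x : Fin r → ℝ}
    {ε : ℝ} (hε : 0 < ε) (hx : x - ε • ξ ∈ K) : x ∈ interior K := by
  obtain ⟨δ, hδ, hball⟩ := Metric.isOpen_iff.mp isOpen_interior ξ hξ
  rw [mem_interior]
  refine ⟨Metric.ball x (ε * δ), fun z hz => ?_, Metric.isOpen_ball, Metric.mem_ball_self (by positivity)⟩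
  have h1 : ε⁻¹ • (z - x) + ξ ∈ K := by
    refine interior_subset (hball ?_)
    rw [Metric.mem_ball, dist_eq_norm]
    have h2 : ε⁻¹ • (z - x) + ξ - ξ = ε⁻¹ • (z - x) := by abel
    rw [h2, norm_smul, Real.norm_eq_abs, abs_of_pos (inv_pos.mpr hε)]
    rw [Metric.mem_ball, dist_eq_norm] at hz
    calc ε⁻¹ * ‖z - x‖ < ε⁻¹ * (ε * δ) := by
          exact mul_lt_mul_of_pos_left hz (inv_pos.mpr hε)
      _ = δ := by field_simp
  have h2 := hadd _ hx _ (hsmul ε hε.le _ h1)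
  have h3 : x - ε • ξ + ε • (ε⁻¹ • (z - x) + ξ) = z := by
    rw [smul_add, smul_smul, mul_inv_cancel₀ hε.ne', one_smul]
    abel
  rwa [h3] at h2

/-- Proposition 1(b): in the same setup, the *interior* lattice points of
`K` are the disjoint union over maximal simplices `I ∈ T` and `b ∈ B_{I,-ξ}` of the sets
`b + ∑_{i ∈ I} ℤ_{≥0} e i`, where `B_{I,-ξ}` is the box with the signs of the
coordinates `β I i` of `ξ` reversed. -/
theorem stmt2 (r d : ℕ) (eZ : Fin d → (Fin r → ℤ)) (K : Set (Fin r → ℝ))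
    (e : Fin d → (Fin r → ℝ)) (he : e = fun i => toR (eZ i))
    (hK : K = coneOn e Finset.univ)
    (hpointed : K ∩ (-K) = {0})
    (hfull : Submodule.span ℝ K = ⊤)
    (T : Finset (Finset (Fin d))) (hT : IsTriangulation e K T)
    (ξ : Fin r → ℝ) (hξ : ξ ∈ interior K)
    (β : Finset (Fin d) → Fin d → ℝ)
    (hβ : ∀ I ∈ T, ξ = ∑ i ∈ I, β I i • e i)
    (hβne : ∀ I ∈ T, ∀ i ∈ I, β I i ≠ 0) :
    ∀ n : Fin r → ℤ, toR n ∈ interior K ↔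
      ∃! p : Finset (Fin d) × (Fin r → ℤ) × (Fin d → ℕ),
        p.1 ∈ T ∧ inBox e p.1 (-(β p.1)) p.2.1 ∧ (∀ i ∉ p.1, p.2.2 i = 0) ∧
        n = p.2.1 + ∑ i ∈ p.1, (p.2.2 i : ℤ) • eZ i := by
  obtain ⟨hTdim, hTcover, hTdisj⟩ := hT
  have heij : ∀ i j, e i j = (eZ i j : ℝ) := fun i j => by rw [he]; rfl
  have hKadd : ∀ a ∈ K, ∀ b ∈ K, a + b ∈ K := by
    rw [hK]
    rintro a ⟨c, hc, rfl⟩ b ⟨c', hc', rfl⟩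
    exact ⟨c + c', fun i => add_nonneg (hc i) (hc' i), by
      simp only [Pi.add_apply, add_smul, Finset.sum_add_distrib]⟩
  have hKsmul : ∀ t : ℝ, 0 ≤ t → ∀ a ∈ K, t • a ∈ K := by
    rw [hK]
    rintro t ht a ⟨c, hc, rfl⟩
    exact ⟨t • c, fun i => mul_nonneg ht (hc i), by
      simp only [Finset.smul_sum, Pi.smul_apply, smul_smul, smul_eq_mul]⟩
  have memK_of : ∀ (I : Finset (Fin d)) (c : Fin d → ℝ), (∀ i ∈ I, 0 ≤ c i) →
      (∑ i ∈ I, c i • e i) ∈ K := by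
    intro I c hc
    rw [hK]
    refine ⟨fun i => if i ∈ I then c i else 0, fun i => ?_, ?_⟩
    · show (0:ℝ) ≤ if i ∈ I then c i else 0
      split
      · exact hc i ‹_›
      · exact le_refl 0
    · calc ∑ i ∈ I, c i • e i
          = ∑ i ∈ Finset.univ ∩ I, c i • e i := by rw [Finset.univ_inter]
        _ = ∑ i ∈ Finset.univ, if i ∈ I then c i • e i else 0 :=
            (Finset.sum_ite_mem _ _ _).symm
        _ = ∑ i ∈ Finset.univ, (if i ∈ I then c i else 0) • e i := by
            exact Finset.sum_congr rfl fun i _ => by split <;> simp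
  intro n
  have hrep : ∀ I ∈ T, ∀ (b : Fin r → ℤ) (m : Fin d → ℕ) (γ' : Fin d → ℝ),
      toR b = ∑ i ∈ I, γ' i • e i →
      (∀ i ∈ I, ((-(β I)) i < 0 → 0 < γ' i ∧ γ' i ≤ 1) ∧
        (0 < (-(β I)) i → 0 ≤ γ' i ∧ γ' i < 1)) →
      n = b + ∑ i ∈ I, (m i : ℤ) • eZ i →
      (toR n = ∑ i ∈ I, (γ' i + (m i : ℝ)) • e i) ∧
        (∀ i ∈ I, 0 ≤ γ' i + (m i : ℝ) ∧ (0 < β I i → 0 < γ' i + (m i : ℝ))) := by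
    intro I hIT b m γ' hbR hbox heqn
    constructor
    · have h1 : toR n = toR b + ∑ i ∈ I, (m i : ℝ) • e i := by
        funext j
        simp only [toR, heqn, Pi.add_apply, Finset.sum_apply, Pi.smul_apply, smul_eq_mul,
          zsmul_eq_mul, Pi.mul_apply, Pi.intCast_apply, heij]
        push_cast [Pi.mul_apply, Pi.intCast_apply]
        ring
      rw [h1, hbR, ← Finset.sum_add_distrib]
      exact Finset.sum_congr rfl fun i _ => by rw [← add_smul]
    · intro i hi
      rcases (hβne I hIT i hi).lt_or_gt with hb | hb
      · have h2 := (hbox i hi).2 (by simpa using hb)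
        have hm : (0:ℝ) ≤ (m i : ℝ) := Nat.cast_nonneg _
        exact ⟨by linarith [h2.1], fun h => absurd h (not_lt.mpr hb.le)⟩
      · have h2 := (hbox i hi).1 (by simpa using hb)
        have hm : (0:ℝ) ≤ (m i : ℝ) := Nat.cast_nonneg _
        exact ⟨by linarith [h2.1], fun _ => by linarith [h2.1]⟩
  constructor
  · intro hint
    obtain ⟨ε₀, hε₀, hεK⟩ := interior_char_fwd (ξ := ξ) hint
    have hTne : T.Nonempty := by
      by_contra h
      rw [Finset.not_nonempty_iff_eq_empty] at h
      subst h
      simp only [Finset.notMem_empty, Set.iUnion_of_empty, Set.iUnion_empty] at hTcover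
      rw [← hTcover] at hint
      simp at hint
    have hpigeon : ∃ I ∈ T, ∀ θ : ℝ, 0 < θ →
        ∃ ε, 0 < ε ∧ ε ≤ θ ∧ toR n - ε • ξ ∈ coneOn e I := by
      by_contra hcon
      push_neg at hcon
      choose θf hθ1 hθ2 using fun I : {I // I ∈ T} => hcon I.1 I.2
      have hTa : T.attach.Nonempty := Finset.attach_nonempty_iff.mpr hTne
      have hθpos : 0 < min ε₀ (T.attach.inf' hTa θf) :=
        lt_min hε₀ ((Finset.lt_inf'_iff hTa).mpr fun I _ => hθ1 I)
      have hmem := hεK _ hθpos (min_le_left _ _)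
      rw [← hTcover] at hmem
      simp only [Set.mem_iUnion] at hmem
      obtain ⟨I, hIT, hmem⟩ := hmem
      exact hθ2 ⟨I, hIT⟩ _ hθpos
        (le_trans (min_le_right _ _) (Finset.inf'_le _ (Finset.mem_attach _ _))) hmem
    obtain ⟨I, hIT, hIfam⟩ := hpigeon
    obtain ⟨hIcard, hIli⟩ := hTdim I hIT
    obtain ⟨ε₁, hε₁, -, c₁, hc₁, hxc₁⟩ := hIfam 1 one_pos
    set γ : Fin d → ℝ := fun i => c₁ i + ε₁ * β I i with hγdef
    have hxγ : toR n = ∑ i ∈ I, γ i • e i := by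
      have h0 : toR n = (toR n - ε₁ • ξ) + ε₁ • ξ := by abel
      rw [h0, hxc₁, hβ I hIT, Finset.smul_sum, ← Finset.sum_add_distrib]
      exact Finset.sum_congr rfl fun i _ => by rw [smul_smul, ← add_smul]
    have hsub : ∀ ε : ℝ, toR n - ε • ξ = ∑ i ∈ I, (γ i - ε * β I i) • e i := by
      intro ε
      rw [hxγ, hβ I hIT, Finset.smul_sum, ← Finset.sum_sub_distrib]
      exact Finset.sum_congr rfl fun i _ => by rw [smul_smul, ← sub_smul]
    have hγpos : ∀ i ∈ I, 0 < β I i → 0 < γ i := fun i hi hb =>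
      add_pos_of_nonneg_of_pos (hc₁ i) (mul_pos hε₁ hb)
    have hγnn : ∀ i ∈ I, 0 ≤ γ i := by
      intro i hi
      by_contra hneg
      push_neg at hneg
      rcases lt_or_ge (β I i) 0 with hb | hb
      · obtain ⟨ε, hε, hεle, c, hc, hxc⟩ :=
          hIfam (γ i / (2 * β I i)) (div_pos_of_neg_of_neg hneg (by linarith))
        have hci : c i = γ i - ε * β I i := coordEq hIli (hxc.symm.trans (hsub ε)) i hi
        have h2 : γ i ≤ ε * (2 * β I i) := by
          rw [le_div_iff_of_neg (by linarith)] at hεle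
          linarith
        nlinarith [hc i]
      · obtain ⟨ε, hε, hεle, c, hc, hxc⟩ := hIfam 1 one_pos
        have hci : c i = γ i - ε * β I i := coordEq hIli (hxc.symm.trans (hsub ε)) i hi
        nlinarith [hc i, mul_nonneg hε.le hb]
    set mZ : Fin d → ℤ := fun i => if 0 < β I i then ⌈γ i⌉ - 1 else ⌊γ i⌋ with hmZdef
    have hmZnn : ∀ i ∈ I, 0 ≤ mZ i := by
      intro i hi
      simp only [hmZdef]
      split
      · next h => have h2 := Int.ceil_pos.mpr (hγpos i hi h); omega
      · exact Int.floor_nonneg.mpr (hγnn i hi)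
    set m : Fin d → ℕ := fun i => if i ∈ I then (mZ i).toNat else 0 with hmdef
    have hmcast : ∀ i ∈ I, (m i : ℤ) = mZ i := fun i hi => by
      simp only [hmdef, if_pos hi, Int.toNat_of_nonneg (hmZnn i hi)]
    set δf : Fin d → ℝ := fun i => γ i - (mZ i : ℝ) with hδdef
    have hδint : ∀ i ∈ I, (0 < β I i → 0 < δf i ∧ δf i ≤ 1) ∧
        (β I i < 0 → 0 ≤ δf i ∧ δf i < 1) := by
      intro i hi
      constructor
      · intro hb
        simp only [hδdef, hmZdef, if_pos hb]
        have h1 := Int.ceil_lt_add_one (γ i)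
        have h2 := Int.le_ceil (γ i)
        push_cast
        constructor <;> linarith
      · intro hb
        simp only [hδdef, hmZdef, if_neg (not_lt.mpr hb.le)]
        have h1 := Int.floor_le (γ i)
        have h2 := Int.lt_floor_add_one (γ i)
        constructor <;> linarith
    set b : Fin r → ℤ := n - ∑ i ∈ I, (m i : ℤ) • eZ i with hbdef
    have heqn : n = b + ∑ i ∈ I, (m i : ℤ) • eZ i := by rw [hbdef]; abel
    have hbR : toR b = ∑ i ∈ I, δf i • e i := by
      have hsumc : ∑ i ∈ I, ((m i : ℤ) : ℝ) • e i = ∑ i ∈ I, (mZ i : ℝ) • e i :=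
        Finset.sum_congr rfl fun i hi => by rw [hmcast i hi]
      have h1 : toR b = toR n - ∑ i ∈ I, (mZ i : ℝ) • e i := by
        rw [← hsumc]
        funext j
        simp only [toR, hbdef, Pi.sub_apply, Finset.sum_apply, Pi.smul_apply, smul_eq_mul,
          zsmul_eq_mul, Pi.mul_apply, Pi.intCast_apply, heij]
        push_cast [Pi.mul_apply, Pi.intCast_apply]
        ring
      rw [h1, hxγ, ← Finset.sum_sub_distrib]
      exact Finset.sum_congr rfl fun i hi => by rw [← sub_smul]
    have hbox : inBox e I (-(β I)) b :=
      ⟨δf, hbR, fun i hi => ⟨fun h => (hδint i hi).1 (by simpa using h),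
        fun h => (hδint i hi).2 (by simpa using h)⟩⟩
    refine ⟨⟨I, b, m⟩, ⟨hIT, hbox, fun i hi => by simp [hmdef, hi], heqn⟩, ?_⟩
    rintro ⟨J, b', m'⟩ ⟨hJT, hbox', hsupp', heqn'⟩
    obtain ⟨γ', hγ'R, hγ'box⟩ := hbox'
    obtain ⟨hxJ, hJho⟩ := hrep J hJT b' m' γ' hγ'R hγ'box heqn'
    obtain ⟨εI, hεI, hmemI⟩ := sub_smul_mem_openCone (a := γ) (hβ I hIT) hxγ (hβne I hIT)
      (fun i hi => ⟨hγnn i hi, hγpos i hi⟩)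
    obtain ⟨εJ, hεJ, hmemJ⟩ := sub_smul_mem_openCone (a := fun i => γ' i + (m' i : ℝ))
      (hβ J hJT) hxJ (hβne J hJT) hJho
    have hJI : J = I := by
      refine (hTdisj I hIT J hJT (toR n - (min εI εJ) • ξ) ?_ ?_).symm
      · exact hmemI _ (lt_min hεI hεJ) (min_le_left _ _)
      · exact hmemJ _ (lt_min hεI hεJ) (min_le_right _ _)
    subst hJI
    have hco : ∀ i ∈ J, γ' i + (m' i : ℝ) = γ i :=
      coordEq hIli (hxJ.symm.trans hxγ)
    have hmm' : ∀ i, m' i = m i := by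
      intro i
      by_cases hi : i ∈ J
      · have hco' : γ' i + (m' i : ℝ) = δf i + (mZ i : ℝ) := by
          rw [hco i hi]
          simp only [hδdef]
          ring
        have hk : ((m' i : ℤ) - mZ i : ℝ) = δf i - γ' i := by push_cast; linarith [hco']
        have hb1 : -1 < δf i - γ' i ∧ δf i - γ' i < 1 := by
          rcases (hβne J hJT i hi).lt_or_gt with hb | hb
          · have h1 := (hδint i hi).2 hb
            have h2 := (hγ'box i hi).2 (by simpa using hb)
            exact ⟨by linarith [h1.1, h1.2, h2.1, h2.2], by linarith [h1.1, h1.2, h2.1, h2.2]⟩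
          · have h1 := (hδint i hi).1 hb
            have h2 := (hγ'box i hi).1 (by simpa using hb)
            exact ⟨by linarith [h1.1, h1.2, h2.1, h2.2], by linarith [h1.1, h1.2, h2.1, h2.2]⟩
        have hz : (m' i : ℤ) = mZ i := by
          have h5 : (-1 : ℝ) < ((m' i : ℤ) - mZ i : ℝ) := by rw [hk]; exact hb1.1
          have h6 : ((m' i : ℤ) - mZ i : ℝ) < 1 := by rw [hk]; exact hb1.2
          have h5' : (-1 : ℤ) < (m' i : ℤ) - mZ i := by exact_mod_cast h5
          have h6' : (m' i : ℤ) - mZ i < 1 := by exact_mod_cast h6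
          omega
        have h7 := hmcast i hi
        omega
      · have h8 : m' i = 0 := hsupp' i hi
        rw [h8]
        simp [hmdef, hi]
    have hmeq : m' = m := funext hmm'
    have hbeq : b' = b := by
      rw [hmeq] at heqn'
      exact (add_right_cancel (heqn.symm.trans heqn')).symm
    rw [hbeq, hmeq]
  · rintro ⟨⟨I, b, m⟩, ⟨hIT, hbox, -, heqn⟩, -⟩
    obtain ⟨γ', hγ'R, hγ'box⟩ := hbox
    obtain ⟨hxI, hIho⟩ := hrep I hIT b m γ' hγ'R hγ'box heqn
    obtain ⟨ε, hε, hmem⟩ := sub_smul_mem_openCone (a := fun i => γ' i + (m i : ℝ))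
      (hβ I hIT) hxI (hβne I hIT) hIho
    obtain ⟨c, hcpos, hsum⟩ := hmem ε hε le_rfl
    have hKmem : toR n - ε • ξ ∈ K := by
      rw [hsum]
      exact memK_of I c fun i hi => (hcpos i hi).le
    exact interior_char_bwd hKadd hKsmul hξ hε hKmem
end

section
/- With the decomposition data (cone $K$, triangulation $T$, generic interior $\xi$, box sets $B_{I,\xi}$ and $B_{I,-\xi}$) and grading $\deg$ with $\deg(e_i)=1$, the polynomials $S(t) = (1-t)^r \sum_{n \in K \cap N} t^{\deg(n)}$ and $T(t) = (1-t)^r \sum_{n \in \mathrm{int}(K) \cap N} t^{\deg(n)}$ satisfy $S(t) = \sum_{I} \sum_{b \in B_{I,\xi}} t^{\deg(b)}$ and $T(t) = \sum_{I} \sum_{b \in B_{I,-\xi}} t^{\deg(b)}$. -/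
open Finset

/-- the generating power series `∑_{n ∈ A ∩ ℤ^r} t^(deg n)` of the lattice points of a
set `A ⊆ ℝ^r`, counted by the degree functional `degf`. -/
noncomputable def latticeSeries {r : ℕ} (A : Set (Fin r → ℝ))
    (degf : (Fin r → ℤ) →ₗ[ℤ] ℤ) : PowerSeries ℤ :=
  PowerSeries.mk fun l => ({n : Fin r → ℤ | toR n ∈ A ∧ degf n = (l : ℤ)}.ncard : ℤ)

namespace Stmt4Aux

variable {r d : ℕ}

/-- a coordinate-constrained cone region -/
def coordSet (e : Fin d → (Fin r → ℝ)) (I : Finset (Fin d)) (S : Fin d → Set ℝ) :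
    Set (Fin r → ℝ) :=
  {x | ∃ c : Fin d → ℝ, (∀ i ∈ I, c i ∈ S i) ∧ x = ∑ i ∈ I, c i • e i}

noncomputable def simpBasis (e : Fin d → (Fin r → ℝ)) (I : Finset (Fin d))
    (hli : LinearIndependent ℝ (fun i : I => e i)) (hcard : I.card = r) :
    Module.Basis I ℝ (Fin r → ℝ) :=
  Module.Basis.mk hli <| ge_of_eq <| hli.span_eq_top_of_card_eq_finrank'
    (by simp [hcard, Module.finrank_fin_fun])

lemma simpBasis_apply (e : Fin d → (Fin r → ℝ)) (I : Finset (Fin d))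
    (hli : LinearIndependent ℝ (fun i : I => e i)) (hcard : I.card = r) (i : I) :
    simpBasis e I hli hcard i = e i := by
  simp [simpBasis]

noncomputable def coord (e : Fin d → (Fin r → ℝ)) (I : Finset (Fin d))
    (hli : LinearIndependent ℝ (fun i : I => e i)) (hcard : I.card = r)
    (x : Fin r → ℝ) (i : I) : ℝ :=
  (simpBasis e I hli hcard).repr x i

lemma coord_unique (e : Fin d → (Fin r → ℝ)) (I : Finset (Fin d))
    (hli : LinearIndependent ℝ (fun i : I => e i)) (hcard : I.card = r)
    {x : Fin r → ℝ} {c : Fin d → ℝ} (hx : x = ∑ i ∈ I, c i • e i) (i : I) :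
    coord e I hli hcard x i = c i := by
  have h : x = ∑ i : I, c i • simpBasis e I hli hcard i := by
    rw [hx, ← Finset.sum_coe_sort I (fun i => c i • e i)]
    exact Finset.sum_congr rfl fun i _ => by rw [simpBasis_apply]
  rw [coord, h, Module.Basis.repr_sum_self]

lemma sum_coord (e : Fin d → (Fin r → ℝ)) (I : Finset (Fin d))
    (hli : LinearIndependent ℝ (fun i : I => e i)) (hcard : I.card = r)
    (x : Fin r → ℝ) :
    x = ∑ i ∈ I, (if h : i ∈ I then coord e I hli hcard x ⟨i, h⟩ else 0) • e i := by
  conv_lhs => rw [← (simpBasis e I hli hcard).sum_repr x]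
  rw [← Finset.sum_coe_sort I
    (fun i => (if h : i ∈ I then coord e I hli hcard x ⟨i, h⟩ else 0) • e i)]
  refine Finset.sum_congr rfl fun i _ => ?_
  rw [simpBasis_apply, dif_pos i.2]
  rfl

lemma mem_coordSet_iff (e : Fin d → (Fin r → ℝ)) (I : Finset (Fin d))
    (hli : LinearIndependent ℝ (fun i : I => e i)) (hcard : I.card = r)
    (S : Fin d → Set ℝ) (x : Fin r → ℝ) :
    x ∈ coordSet e I S ↔ ∀ i : I, coord e I hli hcard x i ∈ S i := by
  constructor
  · rintro ⟨c, hc, rfl⟩ i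
    rw [coord_unique e I hli hcard rfl i]
    exact hc i i.2
  · intro h
    refine ⟨fun i => if h : i ∈ I then coord e I hli hcard x ⟨i, h⟩ else 0, ?_, ?_⟩
    · intro i hi
      simpa [hi] using h ⟨i, hi⟩
    · exact sum_coord e I hli hcard x

lemma mem_coneOn_iff (e : Fin d → (Fin r → ℝ)) (I : Finset (Fin d))
    (hli : LinearIndependent ℝ (fun i : I => e i)) (hcard : I.card = r)
    (x : Fin r → ℝ) :
    x ∈ coneOn e I ↔ ∀ i : I, 0 ≤ coord e I hli hcard x i := by
  constructor
  · rintro ⟨c, hc, rfl⟩ i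
    rw [coord_unique e I hli hcard rfl i]
    exact hc i
  · intro h
    refine ⟨fun i => if h : i ∈ I then coord e I hli hcard x ⟨i, h⟩ else 0, ?_, ?_⟩
    · intro i
      by_cases hi : i ∈ I
      · simpa [hi] using h ⟨i, hi⟩
      · simp [hi]
    · exact sum_coord e I hli hcard x

lemma mem_openConeOn_iff (e : Fin d → (Fin r → ℝ)) (I : Finset (Fin d))
    (hli : LinearIndependent ℝ (fun i : I => e i)) (hcard : I.card = r)
    (x : Fin r → ℝ) :
    x ∈ openConeOn e I ↔ ∀ i : I, 0 < coord e I hli hcard x i := by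
  constructor
  · rintro ⟨c, hc, rfl⟩ i
    rw [coord_unique e I hli hcard rfl i]
    exact hc i i.2
  · intro h
    refine ⟨fun i => if h : i ∈ I then coord e I hli hcard x ⟨i, h⟩ else 0, ?_, ?_⟩
    · intro i hi
      simpa [hi] using h ⟨i, hi⟩
    · exact sum_coord e I hli hcard x

noncomputable def coordL (e : Fin d → (Fin r → ℝ)) (I : Finset (Fin d))
    (hli : LinearIndependent ℝ (fun i : I => e i)) (hcard : I.card = r) (i : I) :
    (Fin r → ℝ) →ₗ[ℝ] ℝ :=
  (Finsupp.lapply i) ∘ₗ ((simpBasis e I hli hcard).repr : (Fin r → ℝ) →ₗ[ℝ] (I →₀ ℝ))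

lemma coordL_apply (e : Fin d → (Fin r → ℝ)) (I : Finset (Fin d))
    (hli : LinearIndependent ℝ (fun i : I => e i)) (hcard : I.card = r) (i : I)
    (x : Fin r → ℝ) : coordL e I hli hcard i x = coord e I hli hcard x i := rfl

lemma coord_add (e : Fin d → (Fin r → ℝ)) (I : Finset (Fin d))
    (hli : LinearIndependent ℝ (fun i : I => e i)) (hcard : I.card = r)
    (x y : Fin r → ℝ) (i : I) :
    coord e I hli hcard (x + y) i = coord e I hli hcard x i + coord e I hli hcard y i := by
  simp [coord]

lemma coord_smul (e : Fin d → (Fin r → ℝ)) (I : Finset (Fin d))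
    (hli : LinearIndependent ℝ (fun i : I => e i)) (hcard : I.card = r)
    (a : ℝ) (x : Fin r → ℝ) (i : I) :
    coord e I hli hcard (a • x) i = a * coord e I hli hcard x i := by
  simp [coord]

lemma coord_continuous (e : Fin d → (Fin r → ℝ)) (I : Finset (Fin d))
    (hli : LinearIndependent ℝ (fun i : I => e i)) (hcard : I.card = r) (i : I) :
    Continuous (fun x => coord e I hli hcard x i) :=
  (coordL e I hli hcard i).continuous_of_finiteDimensional

end Stmt4Aux

namespace Stmt4Aux

variable {r d : ℕ}

lemma coneOn_add {e : Fin d → (Fin r → ℝ)} {x y : Fin r → ℝ}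
    (hx : x ∈ coneOn e Finset.univ) (hy : y ∈ coneOn e Finset.univ) :
    x + y ∈ coneOn e Finset.univ := by
  obtain ⟨c, hc, rfl⟩ := hx
  obtain ⟨c', hc', rfl⟩ := hy
  exact ⟨c + c', fun i => add_nonneg (hc i) (hc' i), by
    rw [← Finset.sum_add_distrib]; exact Finset.sum_congr rfl fun i _ => (add_smul _ _ _).symm⟩

lemma coneOn_smul {e : Fin d → (Fin r → ℝ)} {a : ℝ} (ha : 0 ≤ a) {x : Fin r → ℝ}
    (hx : x ∈ coneOn e Finset.univ) : a • x ∈ coneOn e Finset.univ := by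
  obtain ⟨c, hc, rfl⟩ := hx
  exact ⟨a • c, fun i => mul_nonneg ha (hc i), by
    rw [Finset.smul_sum]; exact Finset.sum_congr rfl fun i _ => (smul_smul _ _ _)⟩

lemma coneOn_subset_univ (e : Fin d → (Fin r → ℝ)) (I : Finset (Fin d)) :
    coneOn e I ⊆ coneOn e Finset.univ := by
  rintro x ⟨c, hc, rfl⟩
  refine ⟨fun i => if i ∈ I then c i else 0, fun i => ?_, ?_⟩
  · by_cases hi : i ∈ I <;> simp [hi, hc i]
  · rw [← Finset.sum_subset (Finset.subset_univ I) (fun i _ hi => by simp [hi])]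
    exact Finset.sum_congr rfl fun i hi => by simp [hi]

lemma openConeOn_subset (e : Fin d → (Fin r → ℝ)) (I : Finset (Fin d)) :
    openConeOn e I ⊆ coneOn e I := by
  rintro x ⟨c, hc, rfl⟩
  refine ⟨fun i => if i ∈ I then c i else 0, ?_, ?_⟩
  · intro i
    by_cases hi : i ∈ I
    · simpa [hi] using (hc i hi).le
    · simp [hi]
  · exact Finset.sum_congr rfl fun i hi => by simp [hi]

lemma openConeOn_isOpen (e : Fin d → (Fin r → ℝ)) (I : Finset (Fin d))
    (hli : LinearIndependent ℝ (fun i : I => e i)) (hcard : I.card = r) :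
    IsOpen (openConeOn e I) := by
  have : openConeOn e I = ⋂ i : I, (fun x => coord e I hli hcard x i) ⁻¹' Set.Ioi 0 := by
    ext x
    simp only [Set.mem_iInter, Set.mem_preimage, Set.mem_Ioi]
    exact mem_openConeOn_iff e I hli hcard x
  rw [this]
  exact isOpen_iInter_of_finite fun i =>
    (coord_continuous e I hli hcard i).isOpen_preimage _ isOpen_Ioi

lemma interior_add_mem {A : Set (Fin r → ℝ)} {e : Fin d → (Fin r → ℝ)}
    (hA : A = coneOn e Finset.univ) {x k : Fin r → ℝ}
    (hx : x ∈ interior A) (hk : k ∈ A) : x + k ∈ interior A := by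
  obtain ⟨U, hUA, hUopen, hxU⟩ := mem_interior.1 hx
  refine mem_interior.2 ⟨(· + k) '' U, ?_, ?_, ⟨x, hxU, rfl⟩⟩
  · rintro y ⟨u, huU, rfl⟩
    rw [hA] at *
    exact coneOn_add (hUA huU) hk
  · exact (isOpenMap_add_right k) U hUopen

/-- all coordinates of points in a degree slice of the cone are bounded -/
lemma slice_bound (e : Fin d → (Fin r → ℝ)) (degR : (Fin r → ℝ) →ₗ[ℝ] ℝ)
    (hdegR : ∀ i, degR (e i) = 1) (l : ℝ) :
    ∃ M : ℝ, ∀ x ∈ coneOn e Finset.univ, degR x = l → ∀ j, |x j| ≤ M := by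
  set B : ℝ := ∑ i, ∑ j, |e i j| with hB
  have hB0 : 0 ≤ B := Finset.sum_nonneg fun i _ => Finset.sum_nonneg fun j _ => abs_nonneg _
  have heB : ∀ i j, |e i j| ≤ B := by
    intro i j
    have h1 : |e i j| ≤ ∑ k, |e i k| :=
      Finset.single_le_sum (f := fun k => |e i k|) (fun k _ => abs_nonneg _) (mem_univ j)
    have h2 : (∑ k, |e i k|) ≤ B :=
      Finset.single_le_sum (f := fun i => ∑ k, |e i k|)
        (fun i _ => Finset.sum_nonneg fun k _ => abs_nonneg _) (mem_univ i)
    exact h1.trans h2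
  refine ⟨l * B, ?_⟩
  rintro x ⟨c, hc, rfl⟩ hdeg j
  have hsum : ∑ i, c i = l := by
    rw [← hdeg, map_sum]
    exact Finset.sum_congr rfl fun i _ => by rw [map_smul, hdegR, smul_eq_mul, mul_one]
  have : |(∑ i, c i • e i) j| ≤ ∑ i, c i * B := by
    rw [Finset.sum_apply]
    refine (Finset.abs_sum_le_sum_abs _ _).trans (Finset.sum_le_sum fun i _ => ?_)
    rw [Pi.smul_apply, smul_eq_mul, abs_mul, abs_of_nonneg (hc i)]
    exact mul_le_mul_of_nonneg_left (heB i j) (hc i)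
  calc |(∑ i, c i • e i) j| ≤ ∑ i, c i * B := this
  _ = l * B := by rw [← Finset.sum_mul, hsum]

lemma lattice_slice_finite {A : Set (Fin r → ℝ)} {M : ℝ}
    (hA : ∀ x ∈ A, ∀ j, |x j| ≤ M) (P : (Fin r → ℤ) → Prop) :
    {n : Fin r → ℤ | toR n ∈ A ∧ P n}.Finite := by
  have hsub : {n : Fin r → ℤ | toR n ∈ A ∧ P n} ⊆
      Set.pi Set.univ (fun _ : Fin r => Set.Icc (-⌈M⌉) ⌈M⌉) := by
    rintro n ⟨hn, -⟩ j _
    have := hA _ hn j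
    have h1 : |(n j : ℝ)| ≤ (⌈M⌉ : ℝ) := this.trans (Int.le_ceil M)
    rw [← Int.cast_abs] at h1
    have h2 : |n j| ≤ ⌈M⌉ := by exact_mod_cast h1
    exact Set.mem_Icc.2 (abs_le.1 h2)
  exact (Set.Finite.pi fun j => Set.finite_Icc _ _).subset hsub

end Stmt4Aux

namespace Stmt4Aux

open Filter Topology

variable {r d : ℕ}

def posSide (β : Fin d → ℝ) (i : Fin d) : Set ℝ :=
  if β i < 0 then Set.Ioi 0 else Set.Ici 0

def boxSide (β : Fin d → ℝ) (i : Fin d) : Set ℝ :=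
  if β i < 0 then Set.Ioc (0:ℝ) 1 else Set.Ico (0:ℝ) 1

lemma eventually_pos {c β : ℝ} (hc : 0 ≤ c) (h : c = 0 → 0 < β) :
    ∀ᶠ ε in 𝓝[>] (0:ℝ), 0 < c + ε * β := by
  rcases hc.lt_or_eq with h1 | h1
  · have ht : Filter.Tendsto (fun ε : ℝ => c + ε * β) (𝓝[>] (0:ℝ)) (𝓝 c) := by
      have : Filter.Tendsto (fun ε : ℝ => c + ε * β) (𝓝 (0:ℝ)) (𝓝 (c + 0 * β)) :=
        (continuous_const.add (continuous_id.mul continuous_const)).tendsto 0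
      simpa using this.mono_left nhdsWithin_le_nhds
    exact ht.eventually_const_lt h1
  · filter_upwards [self_mem_nhdsWithin] with ε hε
    rw [← h1]
    simpa [← h1] using mul_pos hε (h h1.symm)

lemma eventually_neg {c β : ℝ} (hc : c < 0 ∨ (c = 0 ∧ β < 0)) :
    ∀ᶠ ε in 𝓝[>] (0:ℝ), c + ε * β < 0 := by
  rcases hc with h1 | ⟨h1, h2⟩
  · have ht : Filter.Tendsto (fun ε : ℝ => c + ε * β) (𝓝[>] (0:ℝ)) (𝓝 c) := by
      have : Filter.Tendsto (fun ε : ℝ => c + ε * β) (𝓝 (0:ℝ)) (𝓝 (c + 0 * β)) :=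
        (continuous_const.add (continuous_id.mul continuous_const)).tendsto 0
      simpa using this.mono_left nhdsWithin_le_nhds
    exact ht.eventually_lt_const h1
  · filter_upwards [self_mem_nhdsWithin] with ε hε
    rw [h1]
    simpa using mul_neg_of_pos_of_neg hε h2

/-- moving from a half-open cone along the associated generic direction enters the open cone -/
lemma eventually_mem_openCone (e : Fin d → (Fin r → ℝ)) (I : Finset (Fin d))
    (hli : LinearIndependent ℝ (fun i : I => e i)) (hcard : I.card = r)
    (β : Fin d → ℝ) (hβne : ∀ i ∈ I, β i ≠ 0)
    (ξ' : Fin r → ℝ) (hξ' : ξ' = ∑ i ∈ I, β i • e i)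
    {x : Fin r → ℝ} (hx : x ∈ coordSet e I (posSide β)) :
    ∀ᶠ ε in 𝓝[>] (0:ℝ), x + ε • ξ' ∈ openConeOn e I := by
  have hcoord : ∀ (ε : ℝ) (i : I),
      coord e I hli hcard (x + ε • ξ') i = coord e I hli hcard x i + ε * β i := by
    intro ε i
    rw [coord_add, coord_smul, coord_unique e I hli hcard hξ' i]
  have hx' := (mem_coordSet_iff e I hli hcard _ x).1 hx
  have key : ∀ i : I, ∀ᶠ ε in 𝓝[>] (0:ℝ),
      0 < coord e I hli hcard x i + ε * β i := by
    intro i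
    have hxi := hx' i
    unfold posSide at hxi
    by_cases hb : β i.1 < 0
    · rw [if_pos hb] at hxi
      exact eventually_pos (le_of_lt hxi) (fun h0 => absurd h0 (ne_of_gt hxi))
    · rw [if_neg hb] at hxi
      exact eventually_pos hxi (fun _ => lt_of_le_of_ne (not_lt.1 hb) (Ne.symm (hβne i i.2)))
  have := Filter.eventually_all.2 key
  filter_upwards [this] with ε hε
  rw [mem_openConeOn_iff e I hli hcard]
  intro i
  rw [hcoord ε i]
  exact hε i

/-- extracting half-open cone membership from frequent cone membership along `ξ'` -/
lemma mem_posSide_of_frequently (e : Fin d → (Fin r → ℝ)) (I : Finset (Fin d))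
    (hli : LinearIndependent ℝ (fun i : I => e i)) (hcard : I.card = r)
    (β : Fin d → ℝ) (hβne : ∀ i ∈ I, β i ≠ 0)
    (ξ' : Fin r → ℝ) (hξ' : ξ' = ∑ i ∈ I, β i • e i)
    {x : Fin r → ℝ} (hfreq : ∃ᶠ ε in 𝓝[>] (0:ℝ), x + ε • ξ' ∈ coneOn e I) :
    x ∈ coordSet e I (posSide β) := by
  have hcoord : ∀ (ε : ℝ) (i : I),
      coord e I hli hcard (x + ε • ξ') i = coord e I hli hcard x i + ε * β i := by
    intro ε i
    rw [coord_add, coord_smul, coord_unique e I hli hcard hξ' i]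
  have hfreq' : ∀ i : I, ∃ᶠ ε in 𝓝[>] (0:ℝ),
      0 ≤ coord e I hli hcard x i + ε * β i := by
    intro i
    refine hfreq.mono fun ε hε => ?_
    rw [← hcoord ε i]
    exact (mem_coneOn_iff e I hli hcard _).1 hε i
  rw [mem_coordSet_iff e I hli hcard]
  intro i
  have hnonneg : 0 ≤ coord e I hli hcard x i := by
    by_contra hneg
    push_neg at hneg
    exact ((hfreq' i).and_eventually (eventually_neg (Or.inl hneg))).exists.elim
      fun ε ⟨h1, h2⟩ => absurd h1 (not_le.2 h2)
  have hzero : coord e I hli hcard x i = 0 → 0 < β i := by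
    intro h0
    rcases (hβne i i.2).lt_or_gt with hb | hb
    · exact absurd ((hfreq' i).and_eventually (eventually_neg (Or.inr ⟨h0, hb⟩))).exists
        (by rintro ⟨ε, h1, h2⟩; exact absurd h1 (not_le.2 h2))
    · exact hb
  unfold posSide
  by_cases hb : β i.1 < 0
  · rw [if_pos hb]
    rcases hnonneg.lt_or_eq with h | h
    · exact h
    · exact absurd hb (not_lt.2 (le_of_lt (hzero h.symm)))
  · rw [if_neg hb]
    exact hnonneg

lemma frequently_exists_mem {α : Type*} (T : Finset α) (P : α → ℝ → Prop)
    (h : ∀ᶠ ε in 𝓝[>] (0:ℝ), ∃ I ∈ T, P I ε) :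
    ∃ I ∈ T, ∃ᶠ ε in 𝓝[>] (0:ℝ), P I ε := by
  by_contra hcon
  push_neg at hcon
  have hall : ∀ᶠ ε in 𝓝[>] (0:ℝ), ∀ I ∈ T, ¬ P I ε := T.eventually_all.2 hcon
  obtain ⟨ε, ⟨I, hI, hP⟩, hnP⟩ := (h.and hall).exists
  exact hnP I hI hP

end Stmt4Aux

namespace Stmt4Aux

open Filter Topology

variable {r d : ℕ}

lemma coordSet_subset_coneOn (e : Fin d → (Fin r → ℝ)) (I : Finset (Fin d))
    {S : Fin d → Set ℝ} (hS : ∀ i ∈ I, S i ⊆ Set.Ici 0) :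
    coordSet e I S ⊆ coneOn e I := by
  rintro x ⟨c, hc, rfl⟩
  refine ⟨fun i => if h : i ∈ I then c i else 0, fun i => ?_, ?_⟩
  · by_cases hi : i ∈ I
    · simpa [hi] using hS i hi (hc i hi)
    · simp [hi]
  · exact Finset.sum_congr rfl fun i hi => by simp [hi]

lemma coordSet_congr (e : Fin d → (Fin r → ℝ)) (I : Finset (Fin d))
    {S S' : Fin d → Set ℝ} (h : ∀ i ∈ I, S i = S' i) :
    coordSet e I S = coordSet e I S' := by
  ext x
  constructor <;> rintro ⟨c, hc, rfl⟩
  · exact ⟨c, fun i hi => (h i hi) ▸ hc i hi, rfl⟩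
  · exact ⟨c, fun i hi => (h i hi).symm ▸ hc i hi, rfl⟩

/-- the half-open cones attached to the triangulation cover `K` -/
lemma cover_K (e : Fin d → (Fin r → ℝ)) (K : Set (Fin r → ℝ))
    (hK : K = coneOn e Finset.univ)
    (T : Finset (Finset (Fin d))) (hT : IsTriangulation e K T)
    (ξ : Fin r → ℝ) (hξ : ξ ∈ interior K)
    (β : Finset (Fin d) → Fin d → ℝ)
    (hβ : ∀ I ∈ T, ξ = ∑ i ∈ I, β I i • e i)
    (hβne : ∀ I ∈ T, ∀ i ∈ I, β I i ≠ 0)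
    {x : Fin r → ℝ} (hx : x ∈ K) :
    ∃ I ∈ T, x ∈ coordSet e I (posSide (β I)) := by
  have hξK : ξ ∈ K := interior_subset hξ
  have hmem : ∀ᶠ ε in 𝓝[>] (0:ℝ), ∃ I ∈ T, x + ε • ξ ∈ coneOn e I := by
    filter_upwards [self_mem_nhdsWithin] with ε hε
    have : x + ε • ξ ∈ K := by
      rw [hK] at *
      exact coneOn_add hx (coneOn_smul (le_of_lt hε) hξK)
    rw [← hT.2.1] at this
    simpa using this
  obtain ⟨I, hI, hfreq⟩ := frequently_exists_mem T _ hmem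
  obtain ⟨hcard, hli⟩ := hT.1 I hI
  exact ⟨I, hI, mem_posSide_of_frequently e I hli hcard (β I) (hβne I hI) ξ (hβ I hI) hfreq⟩

/-- the opposite half-open cones cover the interior of `K` -/
lemma cover_int (e : Fin d → (Fin r → ℝ)) (K : Set (Fin r → ℝ))
    (hK : K = coneOn e Finset.univ)
    (T : Finset (Finset (Fin d))) (hT : IsTriangulation e K T)
    (ξ : Fin r → ℝ)
    (β : Finset (Fin d) → Fin d → ℝ)
    (hβ : ∀ I ∈ T, ξ = ∑ i ∈ I, β I i • e i)
    (hβne : ∀ I ∈ T, ∀ i ∈ I, β I i ≠ 0)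
    {x : Fin r → ℝ} (hx : x ∈ interior K) :
    ∃ I ∈ T, x ∈ coordSet e I (posSide (-(β I))) := by
  have hmem : ∀ᶠ ε in 𝓝[>] (0:ℝ), ∃ I ∈ T, x + ε • (-ξ) ∈ coneOn e I := by
    obtain ⟨δ, hδ, hball⟩ := Metric.mem_nhds_iff.1 (mem_interior_iff_mem_nhds.1 hx)
    have htend : Filter.Tendsto (fun ε : ℝ => ε * ‖ξ‖) (𝓝[>] (0:ℝ)) (𝓝 0) := by
      have : Filter.Tendsto (fun ε : ℝ => ε * ‖ξ‖) (𝓝 (0:ℝ)) (𝓝 (0 * ‖ξ‖)) :=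
        (continuous_id.mul continuous_const).tendsto 0
      simpa using this.mono_left nhdsWithin_le_nhds
    filter_upwards [htend.eventually_lt_const hδ, self_mem_nhdsWithin] with ε hε hε0
    have hb : x + ε • (-ξ) ∈ Metric.ball x δ := by
      rw [Metric.mem_ball, dist_eq_norm]
      have : x + ε • (-ξ) - x = (-ε) • ξ := by
        simp [smul_neg, neg_smul]
      rw [this, norm_smul]
      simpa [abs_of_pos (Set.mem_Ioi.1 hε0)] using hε
    have : x + ε • (-ξ) ∈ K := hball hb
    rw [← hT.2.1] at this
    simpa using this
  obtain ⟨I, hI, hfreq⟩ := frequently_exists_mem T _ hmem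
  obtain ⟨hcard, hli⟩ := hT.1 I hI
  refine ⟨I, hI, mem_posSide_of_frequently e I hli hcard (-(β I)) ?_ (-ξ) ?_ hfreq⟩
  · intro i hi
    simpa using hβne I hI i hi
  · rw [hβ I hI, ← Finset.sum_neg_distrib]
    exact Finset.sum_congr rfl fun i _ => by simp [neg_smul]

/-- the opposite half-open cone is contained in the interior of `K` -/
lemma hConeNeg_subset_int (e : Fin d → (Fin r → ℝ)) (K : Set (Fin r → ℝ))
    (hK : K = coneOn e Finset.univ)
    (I : Finset (Fin d))
    (hli : LinearIndependent ℝ (fun i : I => e i)) (hcard : I.card = r)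
    (hIK : coneOn e I ⊆ K)
    (ξ : Fin r → ℝ) (hξK : ξ ∈ K)
    (β : Fin d → ℝ) (hβ : ξ = ∑ i ∈ I, β i • e i) (hβne : ∀ i ∈ I, β i ≠ 0)
    {x : Fin r → ℝ} (hx : x ∈ coordSet e I (posSide (-β))) :
    x ∈ interior K := by
  have hev := eventually_mem_openCone e I hli hcard (-β)
    (fun i hi => by simpa using hβne i hi) (-ξ)
    (by rw [hβ, ← Finset.sum_neg_distrib]
        exact Finset.sum_congr rfl fun i _ => by simp [neg_smul]) hx
  obtain ⟨ε, hmem, hε0⟩ := (hev.and self_mem_nhdsWithin).exists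
  have h1 : x + ε • (-ξ) ∈ interior K :=
    interior_maximal ((openConeOn_subset e I).trans hIK)
      (openConeOn_isOpen e I hli hcard) hmem
  have h2 : x = (x + ε • (-ξ)) + ε • ξ := by
    simp [smul_neg]
  rw [h2]
  exact interior_add_mem hK h1 (hK ▸ coneOn_smul (le_of_lt hε0) (hK ▸ hξK))

/-- half-open cones with a common generic direction are pairwise disjoint -/
lemma hCone_disjoint (e : Fin d → (Fin r → ℝ)) (K : Set (Fin r → ℝ))
    (T : Finset (Finset (Fin d))) (hT : IsTriangulation e K T)
    (I : Finset (Fin d)) (hI : I ∈ T) (J : Finset (Fin d)) (hJ : J ∈ T)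
    (ξ' : Fin r → ℝ) (βI βJ : Fin d → ℝ)
    (hβI : ξ' = ∑ i ∈ I, βI i • e i) (hβJ : ξ' = ∑ i ∈ J, βJ i • e i)
    (hβneI : ∀ i ∈ I, βI i ≠ 0) (hβneJ : ∀ i ∈ J, βJ i ≠ 0)
    {x : Fin r → ℝ} (hxI : x ∈ coordSet e I (posSide βI))
    (hxJ : x ∈ coordSet e J (posSide βJ)) : I = J := by
  obtain ⟨hcardI, hliI⟩ := hT.1 I hI
  obtain ⟨hcardJ, hliJ⟩ := hT.1 J hJ
  have hevI := eventually_mem_openCone e I hliI hcardI βI hβneI ξ' hβI hxI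
  have hevJ := eventually_mem_openCone e J hliJ hcardJ βJ hβneJ ξ' hβJ hxJ
  obtain ⟨ε, h1, h2⟩ := (hevI.and hevJ).exists
  exact hT.2.2 I hI J hJ _ h1 h2

lemma ncard_biUnion {α ι : Type*} (T : Finset ι) (f : ι → Set α)
    (hfin : ∀ I ∈ T, (f I).Finite)
    (hdisj : ∀ I ∈ T, ∀ J ∈ T, I ≠ J → Disjoint (f I) (f J)) :
    (⋃ I ∈ T, f I).ncard = ∑ I ∈ T, (f I).ncard := by
  classical
  induction T using Finset.induction_on with
  | empty => simp
  | @insert a s ha ih =>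
    rw [Finset.set_biUnion_insert, Finset.sum_insert ha]
    have hdisj' : Disjoint (f a) (⋃ I ∈ s, f I) := by
      rw [Set.disjoint_left]
      intro x hxa hxs
      simp only [Set.mem_iUnion] at hxs
      obtain ⟨J, hJ, hxJ⟩ := hxs
      exact Set.disjoint_left.1
        (hdisj a (Finset.mem_insert_self a s) J (Finset.mem_insert_of_mem hJ)
          (fun h => ha (h ▸ hJ))) hxa hxJ
    have hfins : (⋃ I ∈ s, f I).Finite :=
      Set.Finite.biUnion s.finite_toSet
        (fun I hI => hfin I (Finset.mem_insert_of_mem hI))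
    rw [Set.ncard_union_eq hdisj' (hfin a (Finset.mem_insert_self a s)) hfins,
      ih (fun I hI => hfin I (Finset.mem_insert_of_mem hI))
        (fun I hI J hJ => hdisj I (Finset.mem_insert_of_mem hI) J (Finset.mem_insert_of_mem hJ))]

end Stmt4Aux

namespace Stmt4Aux

variable {r d : ℕ}

/-- real extension of the integral degree functional -/
noncomputable def degRL (degf : (Fin r → ℤ) →ₗ[ℤ] ℤ) : (Fin r → ℝ) →ₗ[ℝ] ℝ where
  toFun x := ∑ j, (degf (Pi.single j 1) : ℝ) * x j
  map_add' x y := by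
    simp only [Pi.add_apply, mul_add]
    rw [Finset.sum_add_distrib]
  map_smul' a x := by
    simp only [Pi.smul_apply, smul_eq_mul, RingHom.id_apply]
    rw [Finset.mul_sum]
    exact Finset.sum_congr rfl fun j _ => by ring

lemma degRL_toR (degf : (Fin r → ℤ) →ₗ[ℤ] ℤ) (n : Fin r → ℤ) :
    degRL degf (toR n) = (degf n : ℝ) := by
  have hn : n = ∑ j, (n j) • Pi.single j (1:ℤ) := by
    conv_lhs => rw [← Finset.univ_sum_single n]
    exact Finset.sum_congr rfl fun j _ => by
      rw [← Pi.single_smul j (n j) 1, smul_eq_mul, mul_one]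
  have : degf n = ∑ j, n j * degf (Pi.single j 1) := by
    conv_lhs => rw [hn]
    rw [map_sum]
    exact Finset.sum_congr rfl fun j _ => by rw [map_smul, smul_eq_mul]
  rw [this]
  push_cast
  unfold degRL toR
  simp only [LinearMap.coe_mk, AddHom.coe_mk]
  exact Finset.sum_congr rfl fun j _ => by ring

lemma degRL_e (eZ : Fin d → (Fin r → ℤ)) (e : Fin d → (Fin r → ℝ))
    (he : e = fun i => toR (eZ i)) (degf : (Fin r → ℤ) →ₗ[ℤ] ℤ)
    (hdeg : ∀ i, degf (eZ i) = 1) (i : Fin d) : degRL degf (e i) = 1 := by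
  rw [he]
  simp [degRL_toR, hdeg i]

/-- degree slices of coordinate sets with nonnegative coordinates are finite -/
lemma coordSet_slice_finite (eZ : Fin d → (Fin r → ℤ)) (e : Fin d → (Fin r → ℝ))
    (he : e = fun i => toR (eZ i)) (degf : (Fin r → ℤ) →ₗ[ℤ] ℤ)
    (hdeg : ∀ i, degf (eZ i) = 1) (I : Finset (Fin d))
    {S : Fin d → Set ℝ} (hS : ∀ i ∈ I, S i ⊆ Set.Ici 0) (m : ℤ) :
    {n : Fin r → ℤ | toR n ∈ coordSet e I S ∧ degf n = m}.Finite := by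
  obtain ⟨M, hM⟩ := slice_bound e (degRL degf) (degRL_e eZ e he degf hdeg) (m : ℝ)
  have hsub : {n : Fin r → ℤ | toR n ∈ coordSet e I S ∧ degf n = m} ⊆
      {n : Fin r → ℤ | toR n ∈ {x | x ∈ coneOn e Finset.univ ∧ degRL degf x = (m:ℝ)} ∧
        degf n = m} := by
    rintro n ⟨hn, hdn⟩
    refine ⟨⟨coneOn_subset_univ e I (coordSet_subset_coneOn e I hS hn), ?_⟩, hdn⟩
    rw [degRL_toR, hdn]
  refine Set.Finite.subset (lattice_slice_finite (M := M) ?_ (fun n => degf n = m)) hsub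
  rintro x ⟨hx1, hx2⟩ j
  exact hM x hx1 hx2 j

/-- degrees are nonnegative on coordinate sets with nonnegative coordinates -/
lemma deg_nonneg (eZ : Fin d → (Fin r → ℤ)) (e : Fin d → (Fin r → ℝ))
    (he : e = fun i => toR (eZ i)) (degf : (Fin r → ℤ) →ₗ[ℤ] ℤ)
    (hdeg : ∀ i, degf (eZ i) = 1) (I : Finset (Fin d))
    {S : Fin d → Set ℝ} (hS : ∀ i ∈ I, S i ⊆ Set.Ici 0)
    {n : Fin r → ℤ} (hn : toR n ∈ coordSet e I S) : 0 ≤ degf n := by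
  obtain ⟨c, hc, hrep⟩ := hn
  have : degRL degf (toR n) = ∑ i ∈ I, c i := by
    rw [hrep, map_sum]
    exact Finset.sum_congr rfl fun i hi => by
      rw [map_smul, degRL_e eZ e he degf hdeg, smul_eq_mul, mul_one]
  rw [degRL_toR] at this
  have h0 : (0:ℝ) ≤ (degf n : ℝ) := by
    rw [this]
    exact Finset.sum_nonneg fun i hi => hS i hi (hc i hi)
  exact_mod_cast h0

end Stmt4Aux

namespace Stmt4Aux

variable {r d : ℕ}

lemma toR_add (n m : Fin r → ℤ) : toR (n + m) = toR n + toR m := by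
  funext j
  simp [toR]

lemma coord_e_self (e : Fin d → (Fin r → ℝ)) (I : Finset (Fin d))
    (hli : LinearIndependent ℝ (fun i : I => e i)) (hcard : I.card = r)
    (j : Fin d) (hj : j ∈ I) (i : I) :
    coord e I hli hcard (e j) i = if i.1 = j then 1 else 0 := by
  have hrep : e j = ∑ i ∈ I, (if i = j then (1:ℝ) else 0) • e i := by
    have : ∀ i ∈ I, (if i = j then (1:ℝ) else 0) • e i
        = if i = j then e i else 0 := fun i _ => by
      split <;> simp
    rw [Finset.sum_congr rfl this, Finset.sum_ite_eq' I j e, if_pos hj]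
  rw [coord_unique e I hli hcard hrep i]

/-- the key splitting of a degree slice when capping one coordinate -/
lemma peel_slice (eZ : Fin d → (Fin r → ℤ)) (e : Fin d → (Fin r → ℝ))
    (he : e = fun i => toR (eZ i)) (I : Finset (Fin d))
    (hli : LinearIndependent ℝ (fun i : I => e i)) (hcard : I.card = r)
    (degf : (Fin r → ℤ) →ₗ[ℤ] ℤ) (hdeg : ∀ i, degf (eZ i) = 1)
    (j : Fin d) (hj : j ∈ I) (S S' : Fin d → Set ℝ)
    (hS'S : S' j ⊆ S j)
    (heq : ∀ i ∈ I, i ≠ j → S' i = S i)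
    (hup : ∀ t ∈ S j, t + 1 ∈ S j)
    (hdown : ∀ t ∈ S j, t ∉ S' j → t - 1 ∈ S j)
    (hdisj : ∀ t ∈ S' j, t - 1 ∉ S j)
    (m : ℤ) :
    ({n : Fin r → ℤ | toR n ∈ coordSet e I S ∧ degf n = m} =
      {n : Fin r → ℤ | toR n ∈ coordSet e I S' ∧ degf n = m} ∪
      ((· + eZ j) '' {n : Fin r → ℤ | toR n ∈ coordSet e I S ∧ degf n = m - 1})) ∧
    Disjoint {n : Fin r → ℤ | toR n ∈ coordSet e I S' ∧ degf n = m}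
      ((· + eZ j) '' {n : Fin r → ℤ | toR n ∈ coordSet e I S ∧ degf n = m - 1}) := by
  have htoR : ∀ n : Fin r → ℤ, toR (n + eZ j) = toR n + e j := by
    intro n
    rw [toR_add, he]
  have hcoord_shift : ∀ (n : Fin r → ℤ) (i : I),
      coord e I hli hcard (toR (n + eZ j)) i
        = coord e I hli hcard (toR n) i + (if i.1 = j then 1 else 0) := by
    intro n i
    rw [htoR, coord_add, coord_e_self e I hli hcard j hj]
  have hdegshift : ∀ n : Fin r → ℤ, degf (n + eZ j) = degf n + 1 := by
    intro n
    rw [map_add, hdeg]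
  constructor
  · ext n
    simp only [Set.mem_setOf_eq, Set.mem_union, Set.mem_image]
    constructor
    · rintro ⟨hmem, hdm⟩
      have hc := (mem_coordSet_iff e I hli hcard S (toR n)).1 hmem
      by_cases hj' : coord e I hli hcard (toR n) ⟨j, hj⟩ ∈ S' j
      · left
        refine ⟨(mem_coordSet_iff e I hli hcard S' (toR n)).2 fun i => ?_, hdm⟩
        by_cases hij : i.1 = j
        · have : i = (⟨j, hj⟩ : I) := Subtype.ext hij
          rw [this]
          simpa using hj'
        · rw [heq i.1 i.2 hij]
          exact hc i
      · right
        refine ⟨n - eZ j, ⟨?_, ?_⟩, by abel⟩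
        · refine (mem_coordSet_iff e I hli hcard S (toR (n - eZ j))).2 fun i => ?_
          have hnm : toR ((n - eZ j) + eZ j) = toR n := by rw [sub_add_cancel]
          have hsh := hcoord_shift (n - eZ j) i
          rw [hnm] at hsh
          by_cases hij : i.1 = j
          · rw [show i = (⟨j, hj⟩ : I) from Subtype.ext hij] at hsh ⊢
            rw [if_pos rfl] at hsh
            have hSj : coord e I hli hcard (toR n) ⟨j, hj⟩ ∈ S j := by
              simpa using hc ⟨j, hj⟩
            have hres := hdown _ hSj hj'
            have hval : coord e I hli hcard (toR (n - eZ j)) ⟨j, hj⟩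
                = coord e I hli hcard (toR n) ⟨j, hj⟩ - 1 := by linarith
            rw [hval]
            simpa using hres
          · rw [if_neg hij, add_zero] at hsh
            rw [← hsh]
            exact hc i
        · have := hdegshift (n - eZ j)
          rw [sub_add_cancel, hdm] at this
          omega
    · rintro (⟨hmem, hdm⟩ | ⟨n', ⟨hmem, hdm⟩, rfl⟩)
      · refine ⟨(mem_coordSet_iff e I hli hcard S (toR n)).2 fun i => ?_, hdm⟩
        have hc := (mem_coordSet_iff e I hli hcard S' (toR n)).1 hmem
        by_cases hij : i.1 = j
        · have hieq : i = (⟨j, hj⟩ : I) := Subtype.ext hij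
          rw [hieq]
          refine hS'S ?_
          simpa using hc ⟨j, hj⟩
        · rw [← heq i.1 i.2 hij]
          exact hc i
      · constructor
        · refine (mem_coordSet_iff e I hli hcard S (toR (n' + eZ j))).2 fun i => ?_
          rw [hcoord_shift n' i]
          have hc := (mem_coordSet_iff e I hli hcard S (toR n')).1 hmem
          by_cases hij : i.1 = j
          · rw [show i = (⟨j, hj⟩ : I) from Subtype.ext hij, if_pos rfl]
            have hSj : coord e I hli hcard (toR n') ⟨j, hj⟩ ∈ S j := by
              simpa using hc ⟨j, hj⟩
            simpa using hup _ hSj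
          · rw [if_neg hij, add_zero]
            exact hc i
        · rw [hdegshift, hdm]
          omega
  · rw [Set.disjoint_left]
    rintro n ⟨hmem, hdm⟩ ⟨n', ⟨hmem', hdm'⟩, rfl⟩
    have hc := (mem_coordSet_iff e I hli hcard S' (toR (n' + eZ j))).1 hmem
    have hc' := (mem_coordSet_iff e I hli hcard S (toR n')).1 hmem'
    have h1 : coord e I hli hcard (toR (n' + eZ j)) ⟨j, hj⟩ ∈ S' j := by
      simpa using hc ⟨j, hj⟩
    have h2 := hcoord_shift n' ⟨j, hj⟩
    rw [if_pos rfl] at h2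
    have h3 : coord e I hli hcard (toR n') ⟨j, hj⟩ ∈ S j := by
      simpa using hc' ⟨j, hj⟩
    refine hdisj _ h1 ?_
    rw [h2]
    simpa using h3

end Stmt4Aux

namespace Stmt4Aux

variable {r d : ℕ}

lemma posSide_nonneg (β : Fin d → ℝ) (i : Fin d) : posSide β i ⊆ Set.Ici 0 := by
  unfold posSide
  split
  · exact Set.Ioi_subset_Ici_self
  · exact subset_rfl

lemma boxSide_nonneg (β : Fin d → ℝ) (i : Fin d) : boxSide β i ⊆ Set.Ici 0 := by
  unfold boxSide
  split
  · exact fun t ht => le_of_lt ht.1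
  · exact fun t ht => ht.1

lemma side_facts (β : Fin d → ℝ) (i : Fin d) :
    boxSide β i ⊆ posSide β i ∧ (∀ t ∈ posSide β i, t + 1 ∈ posSide β i) ∧
    (∀ t ∈ posSide β i, t ∉ boxSide β i → t - 1 ∈ posSide β i) ∧
    (∀ t ∈ boxSide β i, t - 1 ∉ posSide β i) := by
  unfold posSide boxSide
  split
  · refine ⟨fun t ht => ht.1, fun t ht => ?_, fun t ht ht' => ?_, fun t ht ht' => ?_⟩
    · simp only [Set.mem_Ioi] at *; linarith
    · simp only [Set.mem_Ioi, Set.mem_Ioc, not_and, not_le] at *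
      by_cases h1 : t ≤ 1
      · linarith [ht' ht]
      · linarith
    · simp only [Set.mem_Ioc, Set.mem_Ioi] at *; linarith [ht.2]
  · refine ⟨fun t ht => ht.1, fun t ht => ?_, fun t ht ht' => ?_, fun t ht ht' => ?_⟩
    · simp only [Set.mem_Ici] at *; linarith
    · simp only [Set.mem_Ici, Set.mem_Ico, not_and, not_lt] at *
      linarith [ht' ht]
    · simp only [Set.mem_Ico, Set.mem_Ici] at *; linarith [ht.2]

/-- one peeling step at the level of power series -/
lemma series_step (eZ : Fin d → (Fin r → ℤ)) (e : Fin d → (Fin r → ℝ))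
    (he : e = fun i => toR (eZ i)) (I : Finset (Fin d))
    (hli : LinearIndependent ℝ (fun i : I => e i)) (hcard : I.card = r)
    (degf : (Fin r → ℤ) →ₗ[ℤ] ℤ) (hdeg : ∀ i, degf (eZ i) = 1)
    (j : Fin d) (hj : j ∈ I) (S S' : Fin d → Set ℝ)
    (hS'S : S' j ⊆ S j)
    (heq : ∀ i ∈ I, i ≠ j → S' i = S i)
    (hup : ∀ t ∈ S j, t + 1 ∈ S j)
    (hdown : ∀ t ∈ S j, t ∉ S' j → t - 1 ∈ S j)
    (hdisj : ∀ t ∈ S' j, t - 1 ∉ S j)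
    (hSnn : ∀ i ∈ I, S i ⊆ Set.Ici 0) (hS'nn : ∀ i ∈ I, S' i ⊆ Set.Ici 0) :
    (1 - PowerSeries.X) * latticeSeries (coordSet e I S) degf
      = latticeSeries (coordSet e I S') degf := by
  have hrec : ∀ m : ℤ,
      ({n : Fin r → ℤ | toR n ∈ coordSet e I S ∧ degf n = m}.ncard : ℤ)
        = ({n : Fin r → ℤ | toR n ∈ coordSet e I S' ∧ degf n = m}.ncard : ℤ)
          + ({n : Fin r → ℤ | toR n ∈ coordSet e I S ∧ degf n = m - 1}.ncard : ℤ) := by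
    intro m
    obtain ⟨hsplit, hdisj'⟩ := peel_slice eZ e he I hli hcard degf hdeg j hj S S'
      hS'S heq hup hdown hdisj m
    rw [hsplit, Set.ncard_union_eq hdisj'
      (coordSet_slice_finite eZ e he degf hdeg I hS'nn m)
      ((coordSet_slice_finite eZ e he degf hdeg I hSnn (m-1)).image _),
      Set.ncard_image_of_injective _ (add_left_injective (eZ j))]
    push_cast
    ring
  have hneg : ∀ m : ℤ, m < 0 →
      {n : Fin r → ℤ | toR n ∈ coordSet e I S ∧ degf n = m} = ∅ := by
    intro m hm
    ext n
    simp only [Set.mem_setOf_eq, Set.mem_empty_iff_false, iff_false, not_and]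
    intro hn hd
    have := deg_nonneg eZ e he degf hdeg I hSnn hn
    omega
  ext l
  rw [sub_mul, one_mul, map_sub]
  cases l with
  | zero =>
    rw [PowerSeries.coeff_zero_X_mul]
    unfold latticeSeries
    rw [PowerSeries.coeff_mk, PowerSeries.coeff_mk]
    have := hrec 0
    rw [show (0:ℤ) - 1 = -1 by ring, hneg (-1) (by omega)] at this
    simp only [Nat.cast_zero] at this ⊢
    simp [this]
  | succ k =>
    rw [PowerSeries.coeff_succ_X_mul]
    unfold latticeSeries
    rw [PowerSeries.coeff_mk, PowerSeries.coeff_mk, PowerSeries.coeff_mk]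
    have := hrec ((k+1 : ℕ) : ℤ)
    rw [show ((k+1:ℕ):ℤ) - 1 = ((k:ℕ):ℤ) by push_cast; ring] at this
    push_cast at this ⊢
    linarith

def mixSide (β : Fin d → ℝ) (J : Finset (Fin d)) (i : Fin d) : Set ℝ :=
  if i ∈ J then boxSide β i else posSide β i

lemma mixSide_nonneg (β : Fin d → ℝ) (J : Finset (Fin d)) (i : Fin d) :
    mixSide β J i ⊆ Set.Ici 0 := by
  unfold mixSide
  split
  · exact boxSide_nonneg β i
  · exact posSide_nonneg β i

lemma iterate_step (eZ : Fin d → (Fin r → ℤ)) (e : Fin d → (Fin r → ℝ))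
    (he : e = fun i => toR (eZ i)) (I : Finset (Fin d))
    (hli : LinearIndependent ℝ (fun i : I => e i)) (hcard : I.card = r)
    (degf : (Fin r → ℤ) →ₗ[ℤ] ℤ) (hdeg : ∀ i, degf (eZ i) = 1)
    (β : Fin d → ℝ) :
    ∀ J ⊆ I, (1 - PowerSeries.X) ^ J.card * latticeSeries (coordSet e I (posSide β)) degf
      = latticeSeries (coordSet e I (mixSide β J)) degf := by
  intro J
  induction J using Finset.induction_on with
  | empty =>
    intro _
    simp only [Finset.card_empty, pow_zero, one_mul]
    have hmix : mixSide β ∅ = posSide β := by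
      funext i
      simp [mixSide]
    rw [hmix]
  | @insert a J ha ih =>
    intro hins
    have hJI : J ⊆ I := (Finset.subset_insert a J).trans hins
    have haI : a ∈ I := hins (Finset.mem_insert_self a J)
    rw [Finset.card_insert_of_notMem ha]
    have hre : (1 - PowerSeries.X) ^ (J.card + 1)
        * latticeSeries (coordSet e I (posSide β)) degf
        = (1 - PowerSeries.X)
          * ((1 - PowerSeries.X) ^ J.card * latticeSeries (coordSet e I (posSide β)) degf) := by
      ring
    rw [hre, ih hJI]
    obtain ⟨hsub, hup, hdown, hdisj⟩ := side_facts β a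
    refine series_step eZ e he I hli hcard degf hdeg a haI
      (mixSide β J) (mixSide β (insert a J)) ?_ ?_ ?_ ?_ ?_
      (fun i _ => mixSide_nonneg β J i) (fun i _ => mixSide_nonneg β (insert a J) i)
    · intro t ht
      rw [mixSide, if_pos (Finset.mem_insert_self a J)] at ht
      rw [mixSide, if_neg ha]
      exact hsub ht
    · intro i _ hia
      by_cases hiJ : i ∈ J <;> simp [mixSide, Finset.mem_insert, hia, hiJ]
    · intro t ht
      rw [mixSide, if_neg ha] at ht ⊢
      exact hup t ht
    · intro t ht ht'
      rw [mixSide, if_neg ha] at ht ⊢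
      rw [mixSide, if_pos (Finset.mem_insert_self a J)] at ht'
      exact hdown t ht ht'
    · intro t ht
      rw [mixSide, if_pos (Finset.mem_insert_self a J)] at ht
      rw [mixSide, if_neg ha]
      exact hdisj t ht

end Stmt4Aux

namespace Stmt4Aux

variable {r d : ℕ}

lemma cone_series (eZ : Fin d → (Fin r → ℤ)) (e : Fin d → (Fin r → ℝ))
    (he : e = fun i => toR (eZ i)) (I : Finset (Fin d))
    (hli : LinearIndependent ℝ (fun i : I => e i)) (hcard : I.card = r)
    (degf : (Fin r → ℤ) →ₗ[ℤ] ℤ) (hdeg : ∀ i, degf (eZ i) = 1)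
    (β : Fin d → ℝ) :
    (1 - PowerSeries.X) ^ r * latticeSeries (coordSet e I (posSide β)) degf
      = latticeSeries (coordSet e I (boxSide β)) degf := by
  have h := iterate_step eZ e he I hli hcard degf hdeg β I subset_rfl
  rw [hcard] at h
  rw [h, coordSet_congr e I (S' := boxSide β)
    (fun i hi => show mixSide β I i = boxSide β i by simp [mixSide, hi])]

lemma box_slice_eq (e : Fin d → (Fin r → ℝ)) (I : Finset (Fin d))
    (β : Fin d → ℝ) (hβne : ∀ i ∈ I, β i ≠ 0)
    (degf : (Fin r → ℤ) →ₗ[ℤ] ℤ) (m : ℤ) :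
    {n : Fin r → ℤ | toR n ∈ coordSet e I (boxSide β) ∧ degf n = m}
      = {b : Fin r → ℤ | inBox e I β b ∧ degf b = m} := by
  ext n
  simp only [Set.mem_setOf_eq]
  constructor
  · rintro ⟨⟨c, hc, hrep⟩, hd⟩
    refine ⟨⟨c, hrep, fun i hi => ?_⟩, hd⟩
    have := hc i hi
    unfold boxSide at this
    by_cases hb : β i < 0
    · rw [if_pos hb] at this
      exact ⟨fun _ => ⟨this.1, this.2⟩, fun h => absurd hb (by linarith)⟩
    · rw [if_neg hb] at this
      exact ⟨fun h => absurd h hb, fun _ => ⟨this.1, this.2⟩⟩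
  · rintro ⟨⟨γ, hrep, hcond⟩, hd⟩
    refine ⟨⟨γ, fun i hi => ?_, hrep⟩, hd⟩
    unfold boxSide
    by_cases hb : β i < 0
    · rw [if_pos hb]
      exact (hcond i hi).1 hb
    · rw [if_neg hb]
      exact (hcond i hi).2 (lt_of_le_of_ne (not_lt.1 hb) (Ne.symm (hβne i hi)))

end Stmt4Aux

open Stmt4Aux

/-- Corollary 2: with the decomposition data (graded cone `K`,
triangulation `T`, generic interior `ξ` with coordinates `β`, and boxes `B_{I,±ξ}`),
`S(t) = (1-t)^r ∑_{n ∈ K ∩ N} t^(deg n) = ∑_I ∑_{b ∈ B_{I,ξ}} t^(deg b)` and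
`T(t) = (1-t)^r ∑_{n ∈ int K ∩ N} t^(deg n) = ∑_I ∑_{b ∈ B_{I,-ξ}} t^(deg b)`,
stated coefficientwise. -/
theorem stmt4 (r d : ℕ) (eZ : Fin d → (Fin r → ℤ)) (K : Set (Fin r → ℝ))
    (e : Fin d → (Fin r → ℝ)) (he : e = fun i => toR (eZ i))
    (hK : K = coneOn e Finset.univ)
    (hpointed : K ∩ (-K) = {0})
    (hfull : Submodule.span ℝ K = ⊤)
    (degf : (Fin r → ℤ) →ₗ[ℤ] ℤ) (hdeg : ∀ i, degf (eZ i) = 1)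
    (T : Finset (Finset (Fin d))) (hT : IsTriangulation e K T)
    (ξ : Fin r → ℝ) (hξ : ξ ∈ interior K)
    (β : Finset (Fin d) → Fin d → ℝ)
    (hβ : ∀ I ∈ T, ξ = ∑ i ∈ I, β I i • e i)
    (hβne : ∀ I ∈ T, ∀ i ∈ I, β I i ≠ 0) :
    ∀ l : ℕ,
      (PowerSeries.coeff (R := ℤ) l) ((1 - PowerSeries.X) ^ r * latticeSeries K degf) =
        ∑ I ∈ T, ({b : Fin r → ℤ | inBox e I (β I) b ∧ degf b = (l : ℤ)}.ncard : ℤ) ∧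
      (PowerSeries.coeff (R := ℤ) l) ((1 - PowerSeries.X) ^ r * latticeSeries (interior K) degf) =
        ∑ I ∈ T, ({b : Fin r → ℤ | inBox e I (-(β I)) b ∧ degf b = (l : ℤ)}.ncard : ℤ) := by
  intro l
  have hnegβ : ∀ I ∈ T, -ξ = ∑ i ∈ I, (-(β I)) i • e i := fun I hI => by
    rw [hβ I hI, ← Finset.sum_neg_distrib]
    exact Finset.sum_congr rfl fun i _ => by simp [neg_smul]
  have hβne' : ∀ I ∈ T, ∀ i ∈ I, (-(β I)) i ≠ 0 := fun I hI i hi => by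
    simpa using hβne I hI i hi
  have hfinpos : ∀ I ∈ T, ∀ m : ℤ,
      {n : Fin r → ℤ | toR n ∈ coordSet e I (posSide (β I)) ∧ degf n = m}.Finite :=
    fun I hI m => coordSet_slice_finite eZ e he degf hdeg I
      (fun i _ => posSide_nonneg (β I) i) m
  have hfinneg : ∀ I ∈ T, ∀ m : ℤ,
      {n : Fin r → ℤ | toR n ∈ coordSet e I (posSide (-(β I))) ∧ degf n = m}.Finite :=
    fun I hI m => coordSet_slice_finite eZ e he degf hdeg I
      (fun i _ => posSide_nonneg (-(β I)) i) m
  have hdisjpos : ∀ I ∈ T, ∀ J ∈ T, I ≠ J → ∀ m : ℤ,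
      Disjoint {n : Fin r → ℤ | toR n ∈ coordSet e I (posSide (β I)) ∧ degf n = m}
        {n : Fin r → ℤ | toR n ∈ coordSet e J (posSide (β J)) ∧ degf n = m} :=
    fun I hI J hJ hne m => Set.disjoint_left.2 fun n hnI hnJ =>
      hne (hCone_disjoint e K T hT I hI J hJ ξ (β I) (β J) (hβ I hI) (hβ J hJ)
        (hβne I hI) (hβne J hJ) hnI.1 hnJ.1)
  have hdisjneg : ∀ I ∈ T, ∀ J ∈ T, I ≠ J → ∀ m : ℤ,
      Disjoint {n : Fin r → ℤ | toR n ∈ coordSet e I (posSide (-(β I))) ∧ degf n = m}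
        {n : Fin r → ℤ | toR n ∈ coordSet e J (posSide (-(β J))) ∧ degf n = m} :=
    fun I hI J hJ hne m => Set.disjoint_left.2 fun n hnI hnJ =>
      hne (hCone_disjoint e K T hT I hI J hJ (-ξ) (-(β I)) (-(β J)) (hnegβ I hI)
        (hnegβ J hJ) (hβne' I hI) (hβne' J hJ) hnI.1 hnJ.1)
  have hsliceK : ∀ m : ℤ, {n : Fin r → ℤ | toR n ∈ K ∧ degf n = m}
      = ⋃ I ∈ T, {n : Fin r → ℤ | toR n ∈ coordSet e I (posSide (β I)) ∧ degf n = m} := by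
    intro m
    ext n
    simp only [Set.mem_setOf_eq, Set.mem_iUnion]
    constructor
    · rintro ⟨hn, hd⟩
      obtain ⟨I, hI, hmem⟩ := cover_K e K hK T hT ξ hξ β hβ hβne hn
      exact ⟨I, hI, hmem, hd⟩
    · rintro ⟨I, hI, hmem, hd⟩
      refine ⟨?_, hd⟩
      have h1 := coordSet_subset_coneOn e I (fun i _ => posSide_nonneg (β I) i) hmem
      rw [hK]
      exact coneOn_subset_univ e I h1
  have hsliceInt : ∀ m : ℤ, {n : Fin r → ℤ | toR n ∈ interior K ∧ degf n = m}
      = ⋃ I ∈ T,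
        {n : Fin r → ℤ | toR n ∈ coordSet e I (posSide (-(β I))) ∧ degf n = m} := by
    intro m
    ext n
    simp only [Set.mem_setOf_eq, Set.mem_iUnion]
    constructor
    · rintro ⟨hn, hd⟩
      obtain ⟨I, hI, hmem⟩ := cover_int e K hK T hT ξ β hβ hβne hn
      exact ⟨I, hI, hmem, hd⟩
    · rintro ⟨I, hI, hmem, hd⟩
      obtain ⟨hcard, hli⟩ := hT.1 I hI
      refine ⟨?_, hd⟩
      exact hConeNeg_subset_int e K hK I hli hcard
        (fun x hx => hK ▸ coneOn_subset_univ e I hx) ξ (interior_subset hξ)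
        (β I) (hβ I hI) (hβne I hI) hmem
  have hserK : latticeSeries K degf
      = ∑ I ∈ T, latticeSeries (coordSet e I (posSide (β I))) degf := by
    ext m
    rw [map_sum]
    unfold latticeSeries
    simp only [PowerSeries.coeff_mk]
    rw [hsliceK m, ncard_biUnion T _ (fun I hI => hfinpos I hI m)
      (fun I hI J hJ hne => hdisjpos I hI J hJ hne m)]
    push_cast
    rfl
  have hserInt : latticeSeries (interior K) degf
      = ∑ I ∈ T, latticeSeries (coordSet e I (posSide (-(β I)))) degf := by
    ext m
    rw [map_sum]
    unfold latticeSeries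
    simp only [PowerSeries.coeff_mk]
    rw [hsliceInt m, ncard_biUnion T _ (fun I hI => hfinneg I hI m)
      (fun I hI J hJ hne => hdisjneg I hI J hJ hne m)]
    push_cast
    rfl
  constructor
  · rw [hserK, Finset.mul_sum, map_sum]
    refine Finset.sum_congr rfl fun I hI => ?_
    obtain ⟨hcard, hli⟩ := hT.1 I hI
    rw [cone_series eZ e he I hli hcard degf hdeg (β I)]
    unfold latticeSeries
    rw [PowerSeries.coeff_mk, box_slice_eq e I (β I) (hβne I hI) degf l]
  · rw [hserInt, Finset.mul_sum, map_sum]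
    refine Finset.sum_congr rfl fun I hI => ?_
    obtain ⟨hcard, hli⟩ := hT.1 I hI
    rw [cone_series eZ e he I hli hcard degf hdeg (-(β I))]
    unfold latticeSeries
    rw [PowerSeries.coeff_mk, box_slice_eq e I (-(β I)) (hβne' I hI) degf l]
end

section
/- Let $R$ be a graded ring with $R_0 = \mathbb{C}$, finitely generated in degree 1, of Krull dimension $r$, and let $Z_1,\dots,Z_r$ be homogeneous elements of degree 1. Suppose the Hilbert series of $R/(Z_1,\dots,Z_r)$ is bounded coefficient-wise above by $(1-t)^r$ times the Hilbert series of $R$. Then $Z_1,\dots,Z_r$ is a regular sequence on $R$ and equality of Hilbert series holds. -/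
open PowerSeries


open PowerSeries DirectSum


private def coeffNN (f : PowerSeries ℤ) : Prop := ∀ n, 0 ≤ PowerSeries.coeff n f

private def lexNN (f : PowerSeries ℤ) : Prop :=
  f = 0 ∨ ∃ l, (∀ k < l, PowerSeries.coeff k f = 0) ∧ 0 < PowerSeries.coeff l f

private lemma lexNN_add {f g : PowerSeries ℤ} (hf : lexNN f) (hg : lexNN g) :
    lexNN (f + g) := by
  rcases hf with rfl | ⟨l₁, h₁, h₁'⟩
  · simpa using hg
  rcases hg with rfl | ⟨l₂, h₂, h₂'⟩
  · rw [add_zero]; exact Or.inr ⟨l₁, h₁, h₁'⟩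
  refine Or.inr ⟨min l₁ l₂, fun k hk => ?_, ?_⟩
  · simp only [map_add, h₁ k (lt_of_lt_of_le hk (min_le_left _ _)),
      h₂ k (lt_of_lt_of_le hk (min_le_right _ _)), add_zero]
  · rcases le_total l₁ l₂ with h | h
    · rw [min_eq_left h, map_add]
      rcases eq_or_lt_of_le h with rfl | h'
      · exact add_pos h₁' h₂'
      · rw [h₂ _ h', add_zero]; exact h₁'
    · rw [min_eq_right h, map_add]
      rcases eq_or_lt_of_le h with rfl | h'
      · exact add_pos h₁' h₂'
      · rw [h₁ _ h', zero_add]; exact h₂'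

private lemma lexNN_antisymm {f : PowerSeries ℤ} (hf : lexNN f) (hg : lexNN (-f)) :
    f = 0 := by
  rcases hf with rfl | ⟨l₁, h₁, h₁'⟩
  · rfl
  rcases hg with h | ⟨l₂, h₂, h₂'⟩
  · simpa using congrArg Neg.neg h
  exfalso
  have h₂'' : PowerSeries.coeff l₂ f < 0 := by
    have := h₂'; rw [map_neg, neg_pos] at this; exact this
  have h₂z : ∀ k < l₂, PowerSeries.coeff k f = 0 := by
    intro k hk
    have := h₂ k hk; rw [map_neg, neg_eq_zero] at this; exact this
  rcases lt_trichotomy l₁ l₂ with h | rfl | h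
  · rw [h₂z _ h] at h₁'; exact lt_irrefl _ h₁'
  · exact lt_irrefl _ (h₁'.trans h₂'')
  · rw [h₁ _ h] at h₂''; exact lt_irrefl _ h₂''


private lemma coeffNN_lexNN {f : PowerSeries ℤ} (hf : coeffNN f) : lexNN f := by
  by_cases h : f = 0
  · exact Or.inl h
  · have hex : ∃ n, PowerSeries.coeff n f ≠ 0 := by
      by_contra hc
      push_neg at hc
      exact h (PowerSeries.ext fun n => by simpa using hc n)
    refine Or.inr ⟨Nat.find hex, fun k hk => ?_, ?_⟩
    · have := Nat.find_min hex hk; simpa using this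
    · exact lt_of_le_of_ne (hf _) (Ne.symm (Nat.find_spec hex))

private lemma lexNN_one_sub_X_pow_mul {f : PowerSeries ℤ} (m : ℕ) (hf : coeffNN f) :
    lexNN ((1 - PowerSeries.X) ^ m * f) := by
  by_cases h : f = 0
  · subst h; exact Or.inl (mul_zero _)
  have hex : ∃ n, PowerSeries.coeff n f ≠ 0 := by
    by_contra hc
    push_neg at hc
    exact h (PowerSeries.ext fun n => by simpa using hc n)
  set l := Nat.find hex with hl
  have hmin : ∀ k < l, PowerSeries.coeff k f = 0 := fun k hk => by
    have := Nat.find_min hex hk; simpa using this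
  have key : ∀ k ≤ l, PowerSeries.coeff k ((1 - PowerSeries.X) ^ m * f)
      = if k = l then PowerSeries.coeff l f else 0 := by
    intro k hk
    rw [PowerSeries.coeff_mul]
    rcases eq_or_lt_of_le hk with heq | hk'
    · subst heq
      rw [if_pos rfl]
      rw [Finset.sum_eq_single (0, l)]
      · simp [PowerSeries.coeff_zero_eq_constantCoeff]
      · rintro ⟨i, j⟩ hij hne
        rw [Finset.HasAntidiagonal.mem_antidiagonal] at hij
        have hj : j < l := by
          rcases Nat.eq_zero_or_pos i with rfl | hi
          · exact absurd (by simpa using hij) (by simpa using hne)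
          · omega
        rw [hmin j hj, mul_zero]
      · intro hmem
        exact absurd (Finset.HasAntidiagonal.mem_antidiagonal.mpr (by simp)) hmem
    · rw [if_neg (Nat.ne_of_lt hk')]
      apply Finset.sum_eq_zero
      rintro ⟨i, j⟩ hij
      rw [Finset.HasAntidiagonal.mem_antidiagonal] at hij
      have : j < l := by omega
      rw [hmin j this, mul_zero]
  refine Or.inr ⟨l, fun k hk => ?_, ?_⟩
  · rw [key k (le_of_lt hk), if_neg (Nat.ne_of_lt hk)]
  · rw [key l le_rfl, if_pos rfl]
    exact lt_of_le_of_ne (hf _) (Ne.symm (Nat.find_spec hex))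

private lemma one_sub_X_pow_mul_eq_zero {f : PowerSeries ℤ} {m : ℕ}
    (h : (1 - PowerSeries.X) ^ m * f = 0) : f = 0 := by
  have hu : IsUnit ((1 - PowerSeries.X : PowerSeries ℤ) ^ m) := by
    apply IsUnit.pow
    rw [PowerSeries.isUnit_iff_constantCoeff]
    simp
  exact (hu.mul_right_eq_zero).mp h

private lemma sum_lexNN_eq_zero {n : ℕ} {g : ℕ → PowerSeries ℤ}
    (h : ∀ k < n, lexNN (g k)) (hsum : ∑ k ∈ Finset.range n, g k = 0) :
    ∀ k < n, g k = 0 := by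
  induction n with
  | zero => intro k hk; omega
  | succ n ih =>
    rw [Finset.sum_range_succ] at hsum
    have hs : lexNN (∑ k ∈ Finset.range n, g k) := by
      have : ∀ k < n, lexNN (g k) := fun k hk => h k (by omega)
      clear hsum ih h
      induction n with
      | zero => exact Or.inl (by simp)
      | succ n ih2 =>
        rw [Finset.sum_range_succ]
        exact lexNN_add (ih2 fun k hk => this k (by omega)) (this n (by omega))
    have hgn : g n = 0 := by
      apply lexNN_antisymm (h n (by omega))
      rw [show -g n = ∑ k ∈ Finset.range n, g k by linear_combination -hsum]
      exact hs
    have hrest : ∑ k ∈ Finset.range n, g k = 0 := by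
      rw [hgn, add_zero] at hsum; exact hsum
    intro k hk
    rcases Nat.lt_succ_iff_lt_or_eq.mp hk with hk' | rfl
    · exact ih (fun k hk => h k (by omega)) hrest k hk'
    · exact hgn

section Step

variable {R : Type} [CommRing R] [Algebra ℂ R]
variable (𝒜 : ℕ → Submodule ℂ R) [GradedAlgebra 𝒜]

private noncomputable def piece (I : Ideal R) (l : ℕ) : Submodule ℂ (R ⧸ I) :=
  Submodule.map (Ideal.Quotient.mkₐ ℂ I).toLinearMap (𝒜 l)

private noncomputable def hser (I : Ideal R) : PowerSeries ℤ :=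
  PowerSeries.mk fun l => (Module.finrank ℂ (piece 𝒜 I l) : ℤ)

private lemma mem_piece_iff (I : Ideal R) (l : ℕ) (x : R ⧸ I) :
    x ∈ piece 𝒜 I l ↔ ∃ a ∈ 𝒜 l, Ideal.Quotient.mk I a = x := by
  simp [piece, Submodule.mem_map, Ideal.Quotient.mkₐ_eq_mk]

-- graded projection of products with a degree-one element
private lemma proj_mul_deg_one {z : R} (hz : z ∈ 𝒜 1) (c : R) :
    (∀ l : ℕ, GradedRing.proj 𝒜 (l + 1) (c * z) = GradedRing.proj 𝒜 l c * z) ∧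
      GradedRing.proj 𝒜 0 (c * z) = 0 := by
  induction c using DirectSum.Decomposition.inductionOn 𝒜 with
  | zero => simp
  | @homogeneous i m =>
    have hmz : (m : R) * z ∈ 𝒜 (i + 1) := SetLike.mul_mem_graded m.2 hz
    constructor
    · intro l
      rcases eq_or_ne i l with rfl | hne
      · rw [GradedRing.proj_apply, GradedRing.proj_apply,
          DirectSum.decompose_of_mem_same 𝒜 hmz, DirectSum.decompose_of_mem_same 𝒜 m.2]
      · rw [GradedRing.proj_apply, GradedRing.proj_apply,
          DirectSum.decompose_of_mem_ne 𝒜 hmz (by omega),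
          DirectSum.decompose_of_mem_ne 𝒜 m.2 hne, zero_mul]
    · rw [GradedRing.proj_apply, DirectSum.decompose_of_mem_ne 𝒜 hmz (by omega)]
  | add x y hx hy =>
    refine ⟨fun l => ?_, ?_⟩
    · rw [add_mul, map_add, map_add, hx.1 l, hy.1 l, add_mul]
    · rw [add_mul, map_add, hx.2, hy.2, add_zero]

private lemma step (hfin : ∀ l, Module.Finite ℂ (𝒜 l)) (I : Ideal R)
    (hI : I.IsHomogeneous 𝒜) {z : R} (hz : z ∈ 𝒜 1) :
    ∃ D : PowerSeries ℤ, (∀ n, 0 ≤ PowerSeries.coeff n D) ∧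
      hser 𝒜 (I ⊔ Ideal.span {z}) = (1 - PowerSeries.X) * hser 𝒜 I + D ∧
      (D = 0 → ∀ y : R, z * y ∈ I → y ∈ I) := by
  classical
  set J := I ⊔ Ideal.span {z} with hJdef
  have hIJ : I ≤ J := le_sup_left
  have hzJ : z ∈ J := Ideal.mem_sup_right (Ideal.mem_span_singleton_self z)
  -- the factor map as a ℂ-linear map
  set τ : (R ⧸ I) →ₗ[ℂ] (R ⧸ J) :=
    { toFun := Ideal.Quotient.factor hIJ
      map_add' := fun a b => map_add _ a b
      map_smul' := by
        intro c x
        obtain ⟨y, rfl⟩ := Ideal.Quotient.mk_surjective x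
        have h1 : c • Ideal.Quotient.mk I y = Ideal.Quotient.mk I (c • y) := by
          rw [← Ideal.Quotient.mkₐ_eq_mk ℂ I, ← map_smul]
        have h2 : c • Ideal.Quotient.mk J y = Ideal.Quotient.mk J (c • y) := by
          rw [← Ideal.Quotient.mkₐ_eq_mk ℂ J, ← map_smul]
        simp only [RingHom.id_apply, h1, Ideal.Quotient.factor_mk, h2] } with hτdef
  have hτ : ∀ a : R, τ (Ideal.Quotient.mk I a) = Ideal.Quotient.mk J a := fun a =>
    Ideal.Quotient.factor_mk hIJ a
  -- multiplication by z on R ⧸ I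
  set μ : (R ⧸ I) →ₗ[ℂ] (R ⧸ I) := LinearMap.mulLeft ℂ (Ideal.Quotient.mk I z) with hμdef
  have hμ : ∀ a : R, μ (Ideal.Quotient.mk I a) = Ideal.Quotient.mk I (z * a) := fun a => by
    rw [hμdef, LinearMap.mulLeft_apply, ← map_mul]
  have instPiece : ∀ l, Module.Finite ℂ (piece 𝒜 I l) := by
    intro l
    haveI := hfin l
    exact Module.Finite.map _ _
  -- the defect dimensions
  set K : ℕ → Submodule ℂ (R ⧸ I) := fun l =>
    Submodule.map (piece 𝒜 I l).subtype (LinearMap.ker (μ.domRestrict (piece 𝒜 I l))) with hKdef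
  set d : ℕ → ℕ := fun l => Module.finrank ℂ (K l) with hddef
  -- membership in K
  have hKmem : ∀ l x, x ∈ K l ↔ x ∈ piece 𝒜 I l ∧ μ x = 0 := by
    intro l x
    constructor
    · rintro ⟨⟨v, hv⟩, hk, rfl⟩
      simp only [SetLike.mem_coe, LinearMap.mem_ker, LinearMap.domRestrict_apply] at hk
      exact ⟨hv, hk⟩
    · rintro ⟨hx, hmu⟩
      refine ⟨⟨x, hx⟩, ?_, rfl⟩
      simp only [SetLike.mem_coe, LinearMap.mem_ker, LinearMap.domRestrict_apply]
      exact hmu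
  -- the kernel of τ on each piece
  set S : ℕ → Submodule ℂ (R ⧸ I) := fun l =>
    Submodule.map (piece 𝒜 I l).subtype (LinearMap.ker (τ.domRestrict (piece 𝒜 I l))) with hSdef
  have hSmem : ∀ l x, x ∈ S l ↔ x ∈ piece 𝒜 I l ∧ τ x = 0 := by
    intro l x
    constructor
    · rintro ⟨⟨v, hv⟩, hk, rfl⟩
      simp only [SetLike.mem_coe, LinearMap.mem_ker, LinearMap.domRestrict_apply] at hk
      exact ⟨hv, hk⟩
    · rintro ⟨hx, hmu⟩
      refine ⟨⟨x, hx⟩, ?_, rfl⟩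
      simp only [SetLike.mem_coe, LinearMap.mem_ker, LinearMap.domRestrict_apply]
      exact hmu
  -- counting via τ
  have hcount1 : ∀ l, Module.finrank ℂ (piece 𝒜 J l) + Module.finrank ℂ (S l)
      = Module.finrank ℂ (piece 𝒜 I l) := by
    intro l
    haveI := instPiece l
    have h1 := LinearMap.finrank_range_add_finrank_ker (τ.domRestrict (piece 𝒜 I l))
    have h2 : LinearMap.range (τ.domRestrict (piece 𝒜 I l)) = piece 𝒜 J l := by
      rw [LinearMap.range_domRestrict]
      ext x
      constructor
      · rintro ⟨y, hy, rfl⟩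
        rw [SetLike.mem_coe, mem_piece_iff] at hy
        obtain ⟨a, ha, rfl⟩ := hy
        rw [mem_piece_iff]
        exact ⟨a, ha, (hτ a).symm⟩
      · intro hx
        rw [mem_piece_iff] at hx
        obtain ⟨a, ha, rfl⟩ := hx
        exact ⟨Ideal.Quotient.mk I a, (mem_piece_iff 𝒜 I l _).mpr ⟨a, ha, rfl⟩, hτ a⟩
    have h3 : Module.finrank ℂ (LinearMap.ker (τ.domRestrict (piece 𝒜 I l)))
        = Module.finrank ℂ (S l) :=
      (Submodule.equivMapOfInjective _ (Submodule.injective_subtype _) _).finrank_eq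
    rw [h2, h3] at h1
    exact h1
  -- counting via μ
  have hcount2 : ∀ l, Module.finrank ℂ (Submodule.map μ (piece 𝒜 I l)) + d l
      = Module.finrank ℂ (piece 𝒜 I l) := by
    intro l
    haveI := instPiece l
    have h1 := LinearMap.finrank_range_add_finrank_ker (μ.domRestrict (piece 𝒜 I l))
    rw [LinearMap.range_domRestrict] at h1
    have h3 : Module.finrank ℂ (LinearMap.ker (μ.domRestrict (piece 𝒜 I l)))
        = Module.finrank ℂ (K l) :=
      (Submodule.equivMapOfInjective _ (Submodule.injective_subtype _) _).finrank_eq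
    rw [h3] at h1
    exact h1
  -- S 0 = ⊥
  have hS0 : S 0 = ⊥ := by
    rw [eq_bot_iff]
    intro x hx
    rw [hSmem] at hx
    obtain ⟨hx1, hx2⟩ := hx
    rw [mem_piece_iff] at hx1
    obtain ⟨a, ha, rfl⟩ := hx1
    rw [hτ, Ideal.Quotient.eq_zero_iff_mem] at hx2
    rw [hJdef] at hx2
    obtain ⟨y, hy, w, hw, hsum⟩ := Submodule.mem_sup.mp hx2
    obtain ⟨c, rfl⟩ := Ideal.mem_span_singleton'.mp hw
    have haI : a ∈ I := by
      have h6 : GradedRing.proj 𝒜 0 a = a := by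
        rw [GradedRing.proj_apply, DirectSum.decompose_of_mem_same 𝒜 ha]
      have h7 := (proj_mul_deg_one 𝒜 hz c).2
      have h5 : GradedRing.proj 𝒜 0 y ∈ I := by
        rw [GradedRing.proj_apply]; exact hI _ hy
      have : a = GradedRing.proj 𝒜 0 y := by
        conv_lhs => rw [← h6, ← hsum]
        rw [map_add, h7, add_zero]
      rw [this]; exact h5
    rw [Submodule.mem_bot, Ideal.Quotient.eq_zero_iff_mem]
    exact haI
  -- S (l+1) = μ-image of the previous piece
  have hSsucc : ∀ l, S (l + 1) = Submodule.map μ (piece 𝒜 I l) := by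
    intro l
    ext x
    rw [hSmem, Submodule.mem_map]
    constructor
    · rintro ⟨hx1, hx2⟩
      rw [mem_piece_iff] at hx1
      obtain ⟨a, ha, rfl⟩ := hx1
      rw [hτ, Ideal.Quotient.eq_zero_iff_mem] at hx2
      rw [hJdef] at hx2
      obtain ⟨y, hy, w, hw, hsum⟩ := Submodule.mem_sup.mp hx2
      obtain ⟨c, rfl⟩ := Ideal.mem_span_singleton'.mp hw
      have key : a - GradedRing.proj 𝒜 l c * z ∈ I := by
        have h5 : GradedRing.proj 𝒜 (l + 1) y ∈ I := by
          rw [GradedRing.proj_apply]; exact hI _ hy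
        have h6 : GradedRing.proj 𝒜 (l + 1) a = a := by
          rw [GradedRing.proj_apply, DirectSum.decompose_of_mem_same 𝒜 ha]
        have h7 := (proj_mul_deg_one 𝒜 hz c).1 l
        have h8 : a = GradedRing.proj 𝒜 (l + 1) y + GradedRing.proj 𝒜 l c * z := by
          conv_lhs => rw [← h6, ← hsum]
          rw [map_add, h7]
        rw [h8]
        simpa using h5
      refine ⟨Ideal.Quotient.mk I (GradedRing.proj 𝒜 l c), ?_, ?_⟩
      · rw [mem_piece_iff]
        refine ⟨GradedRing.proj 𝒜 l c, ?_, rfl⟩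
        rw [GradedRing.proj_apply]
        exact SetLike.coe_mem _
      · rw [hμ]
        rw [Ideal.Quotient.mk_eq_mk_iff_sub_mem]
        have : z * GradedRing.proj 𝒜 l c - a = -(a - GradedRing.proj 𝒜 l c * z) := by ring
        rw [this]
        exact I.neg_mem key
    · rintro ⟨v, hv, rfl⟩
      rw [mem_piece_iff] at hv
      obtain ⟨b, hb, rfl⟩ := hv
      rw [hμ]
      constructor
      · rw [mem_piece_iff]
        refine ⟨z * b, ?_, rfl⟩
        have := SetLike.mul_mem_graded hz hb
        rwa [add_comm] at this
      · rw [hτ, Ideal.Quotient.eq_zero_iff_mem]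
        exact J.mul_mem_right b hzJ
  -- assemble the series identity
  refine ⟨PowerSeries.mk fun l => match l with | 0 => 0 | (l + 1) => (d l : ℤ), ?_, ?_, ?_⟩
  · intro n
    cases n <;> simp [PowerSeries.coeff_mk]
  · ext n
    rw [map_add, sub_mul, one_mul, map_sub, PowerSeries.coeff_mk]
    cases n with
    | zero =>
      rw [PowerSeries.coeff_zero_X_mul]
      simp only [hser, PowerSeries.coeff_mk]
      have hc := hcount1 0
      rw [hS0, finrank_bot] at hc
      rw [← hc]
      push_cast
      ring
    | succ n =>
      rw [PowerSeries.coeff_succ_X_mul]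
      simp only [hser, PowerSeries.coeff_mk]
      have hc1 := hcount1 (n + 1)
      rw [hSsucc n] at hc1
      have hc2 := hcount2 n
      have : (Module.finrank ℂ (piece 𝒜 J (n + 1)) : ℤ)
          = (Module.finrank ℂ (piece 𝒜 I (n + 1)) : ℤ)
            - (Module.finrank ℂ (piece 𝒜 I n) : ℤ) + (d n : ℤ) := by
        push_cast [← hc1, ← hc2]
        ring
      rw [this]
  -- regularity consequence
  · intro hD y hzy
    have hd0 : ∀ l, d l = 0 := by
      intro l
      have := congrArg (PowerSeries.coeff (l + 1)) hD
      rw [PowerSeries.coeff_mk, map_zero] at this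
      have this' : (d l : ℤ) = 0 := this
      exact_mod_cast this'

    have hK0 : ∀ l, K l = ⊥ := by
      intro l
      haveI := instPiece l
      have hle : K l ≤ piece 𝒜 I l := Submodule.map_subtype_le _ _
      haveI : FiniteDimensional ℂ (K l) := Submodule.finiteDimensional_of_le hle
      exact Submodule.finrank_eq_zero.mp (hd0 l)
    have hcomp : ∀ m, GradedRing.proj 𝒜 m y ∈ I := by
      intro m
      have h1 := (proj_mul_deg_one 𝒜 hz y).1 m
      have h2 : GradedRing.proj 𝒜 (m + 1) (y * z) ∈ I := by
        rw [GradedRing.proj_apply]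
        exact hI _ (by rwa [mul_comm] at hzy)
      rw [h1] at h2
      have h3 : μ (Ideal.Quotient.mk I (GradedRing.proj 𝒜 m y)) = 0 := by
        rw [hμ, Ideal.Quotient.eq_zero_iff_mem, mul_comm]
        exact h2
      have h4 : Ideal.Quotient.mk I (GradedRing.proj 𝒜 m y) ∈ K m := by
        rw [hKmem]
        refine ⟨?_, h3⟩
        rw [mem_piece_iff]
        refine ⟨GradedRing.proj 𝒜 m y, ?_, rfl⟩
        rw [GradedRing.proj_apply]
        exact SetLike.coe_mem _
      rw [hK0 m, Submodule.mem_bot, Ideal.Quotient.eq_zero_iff_mem] at h4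
      exact h4
    have hsum := DirectSum.sum_support_decompose 𝒜 y
    rw [← hsum]
    refine Ideal.sum_mem _ fun m _ => ?_
    have := hcomp m
    rwa [GradedRing.proj_apply] at this

end Step

private lemma lexNN_sum {n : ℕ} {g : ℕ → PowerSeries ℤ}
    (h : ∀ k < n, lexNN (g k)) : lexNN (∑ k ∈ Finset.range n, g k) := by
  induction n with
  | zero => exact Or.inl (by simp)
  | succ n ih =>
    rw [Finset.sum_range_succ]
    exact lexNN_add (ih fun k hk => h k (by omega)) (h n (by omega))


set_option maxHeartbeats 1000000 in
/-- let `R` be a graded ring with `R₀ = ℂ`, finitely generated in degree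
one, of Krull dimension `r`, and `Z_1, …, Z_r` homogeneous elements of degree one.  If
the Hilbert series of `R/(Z_1, …, Z_r)` is bounded above by `(1-t)^r` times the Hilbert
series of `R` (in the first-nonzero-coefficient order on power series), then
`Z_1, …, Z_r` is a regular sequence on `R` and the two Hilbert series are equal. -/
theorem stmt17 (R : Type) [CommRing R] [Algebra ℂ R] [IsNoetherianRing R]
    (𝒜 : ℕ → Submodule ℂ R) [GradedAlgebra 𝒜]
    (h0 : 𝒜 0 = Submodule.span ℂ {1})  -- `R₀ = ℂ`
    (hfin : ∀ l, Module.Finite ℂ ↥(𝒜 l))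
    (hgen1 : Algebra.adjoin ℂ ((𝒜 1 : Set R)) = ⊤)  -- generated in degree 1
    (r : ℕ) (hdim : ringKrullDim R = (r : WithBot (WithTop ℕ)))
    (Z : Fin r → R) (hZ1 : ∀ j, Z j ∈ 𝒜 1)  -- homogeneous of degree 1
    -- Hilbert series of the quotient `R/(Z)`, graded by the images of the `𝒜 l`
    (A B : PowerSeries ℤ)
    (hA : A = PowerSeries.mk fun l =>
      (Module.finrank ℂ ↥(Submodule.map
        (Ideal.Quotient.mkₐ ℂ (Ideal.span (Set.range Z))).toLinearMap (𝒜 l)) : ℤ))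
    (hB : B = (1 - PowerSeries.X) ^ r *
      PowerSeries.mk fun l => (Module.finrank ℂ ↥(𝒜 l) : ℤ))
    -- `A ≤ B` in the first-nonzero-coefficient partial order on power series
    (hle : A = B ∨ ∃ l : ℕ, (∀ k < l, PowerSeries.coeff k A = PowerSeries.coeff k B) ∧
      PowerSeries.coeff l A < PowerSeries.coeff l B) :
    RingTheory.Sequence.IsRegular R (List.ofFn Z) ∧ A = B := by
  classical
  -- R is nontrivial
  have hnt : Nontrivial R := by
    by_contra h
    rw [not_nontrivial_iff_subsingleton] at h
    rw [@ringKrullDim_eq_bot_of_subsingleton R _ h] at hdim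
    exact absurd hdim (WithBot.bot_ne_natCast r)
  -- the ideal tower
  set Ival : ℕ → Ideal R := fun i => Ideal.ofList ((List.ofFn Z).take i) with hIvaldef
  have hIval0 : Ival 0 = ⊥ := by simp [hIvaldef]
  have hIvalsucc : ∀ i (hi : i < r),
      Ival (i + 1) = Ival i ⊔ Ideal.span {Z ⟨i, hi⟩} := by
    intro i hi
    have hlen : i < (List.ofFn Z).length := by simp [hi]
    have : (List.ofFn Z).take (i + 1) = (List.ofFn Z).take i ++ [(List.ofFn Z)[i]] := by
      rw [List.take_succ, List.getElem?_eq_getElem hlen]; rfl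
    rw [hIvaldef]
    simp only [this, Ideal.ofList_append, Ideal.ofList_singleton, List.getElem_ofFn]
  -- main induction
  have main : ∀ i (hir : i ≤ r), (Ival i).IsHomogeneous 𝒜 ∧ ∃ D : ℕ → PowerSeries ℤ,
      (∀ k, k < i → ∀ n, 0 ≤ PowerSeries.coeff n (D k)) ∧
      hser 𝒜 (Ival i) = (1 - PowerSeries.X) ^ i * hser 𝒜 ⊥ +
        ∑ k ∈ Finset.range i, (1 - PowerSeries.X) ^ (i - 1 - k) * D k ∧
      (∀ k (hk : k < i), D k = 0 →
        ∀ y, Z ⟨k, lt_of_lt_of_le hk hir⟩ * y ∈ Ival k → y ∈ Ival k) := by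
    intro i
    induction i with
    | zero =>
      intro _
      refine ⟨hIval0 ▸ Ideal.IsHomogeneous.bot 𝒜, fun _ => 0, ?_, ?_, ?_⟩
      · intro k hk; omega
      · simp [hIval0]
      · intro k hk; omega
    | succ i ih =>
      intro hi1
      have hi : i < r := by omega
      have hile : i ≤ r := by omega
      obtain ⟨hhom, D, hDnn, hform, hreg⟩ := ih hile
      have hspanhom : (Ideal.span {Z ⟨i, hi⟩}).IsHomogeneous 𝒜 := by
        apply Ideal.homogeneous_span
        intro x hx
        rw [Set.mem_singleton_iff] at hx
        exact ⟨1, hx ▸ hZ1 _⟩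
      obtain ⟨Dnew, hDnewnn, hDnewform, hDnewreg⟩ :=
        step 𝒜 hfin (Ival i) hhom (hZ1 ⟨i, hi⟩)
      rw [← hIvalsucc i hi] at hDnewform
      refine ⟨(hIvalsucc i hi) ▸ Ideal.IsHomogeneous.sup hhom hspanhom,
        fun k => if k = i then Dnew else D k, ?_, ?_, ?_⟩
      · intro k hk n
        show 0 ≤ PowerSeries.coeff n (if k = i then Dnew else D k)
        by_cases hki : k = i
        · rw [if_pos hki]; exact hDnewnn n
        · rw [if_neg hki]; exact hDnn k (by omega) n
      · beta_reduce
        rw [hDnewform, hform]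
        rw [Finset.sum_range_succ, if_pos rfl]
        have hsub : (i + 1) - 1 - i = 0 := by omega
        rw [hsub, pow_zero, one_mul]
        have hmulsum : (1 - PowerSeries.X) *
            ((1 - PowerSeries.X) ^ i * hser 𝒜 ⊥ +
              ∑ k ∈ Finset.range i, (1 - PowerSeries.X) ^ (i - 1 - k) * D k)
            = (1 - PowerSeries.X) ^ (i + 1) * hser 𝒜 ⊥ +
              ∑ k ∈ Finset.range i, (1 - PowerSeries.X) ^ (i + 1 - 1 - k) *
                (if k = i then Dnew else D k) := by
          rw [mul_add, Finset.mul_sum]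
          congr 1
          · ring
          · apply Finset.sum_congr rfl
            intro k hk
            rw [Finset.mem_range] at hk
            rw [if_neg (by omega)]
            have he : i + 1 - 1 - k = (i - 1 - k) + 1 := by omega
            rw [he, pow_succ']
            ring
        rw [hmulsum]
        ring
      · intro k hk hDk y hy
        replace hDk : (if k = i then Dnew else D k) = 0 := hDk
        by_cases hki : k = i
        · subst hki
          rw [if_pos rfl] at hDk
          exact hDnewreg hDk y hy
        · rw [if_neg hki] at hDk
          exact hreg k (by omega) hDk y hy
  obtain ⟨hhom, D, hDnn, hform, hreg⟩ := main r le_rfl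
  -- identification of A and B
  have htake : (List.ofFn Z).take r = List.ofFn Z :=
    List.take_of_length_le (le_of_eq (List.length_ofFn (f := Z)))
  have hIr : Ival r = Ideal.span (Set.range Z) := by
    show Ideal.ofList ((List.ofFn Z).take r) = Ideal.span (Set.range Z)
    rw [htake]
    have h : {a : R | a ∈ List.ofFn Z} = Set.range Z := by
      ext x
      simp [List.mem_ofFn]
    show Ideal.span {a : R | a ∈ List.ofFn Z} = Ideal.span (Set.range Z)
    rw [h]
  have hAeq : A = hser 𝒜 (Ival r) := by
    rw [hA, hIr]
    rfl
  have hBeq : B = (1 - PowerSeries.X) ^ r * hser 𝒜 ⊥ := by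
    rw [hB]
    congr 1
    ext n
    rw [PowerSeries.coeff_mk]
    simp only [hser, PowerSeries.coeff_mk]
    congr 1
    have hinj : Function.Injective (Ideal.Quotient.mkₐ ℂ (⊥ : Ideal R)).toLinearMap := by
      intro a b hab
      have : a - b ∈ (⊥ : Ideal R) := by
        rw [← Ideal.Quotient.mk_eq_mk_iff_sub_mem]
        simpa [Ideal.Quotient.mkₐ_eq_mk] using hab
      rw [Ideal.mem_bot, sub_eq_zero] at this
      exact this
    exact (Submodule.equivMapOfInjective _ hinj (𝒜 n)).finrank_eq
  -- the difference is a sum of lex-nonneg series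
  set g : ℕ → PowerSeries ℤ := fun k => (1 - PowerSeries.X) ^ (r - 1 - k) * D k with hgdef
  have hdiff : A - B = ∑ k ∈ Finset.range r, g k := by
    rw [hAeq, hBeq, hform]; ring
  have hglex : ∀ k < r, lexNN (g k) := fun k hk =>
    lexNN_one_sub_X_pow_mul _ (hDnn k hk)
  -- A = B
  have hAB : A = B := by
    have h1 : lexNN (A - B) := hdiff ▸ lexNN_sum hglex
    have h2 : lexNN (-(A - B)) := by
      rcases hle with h | ⟨l, hl1, hl2⟩
      · rw [h]; simp [lexNN]
      · refine Or.inr ⟨l, fun k hk => ?_, ?_⟩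
        · rw [map_neg, map_sub, hl1 k hk]; ring
        · rw [map_neg, map_sub]; omega
    have := lexNN_antisymm h1 h2
    have := sub_eq_zero.mp this
    exact this
  refine ⟨?_, hAB⟩
  -- all defects vanish
  have hsum0 : ∑ k ∈ Finset.range r, g k = 0 := by rw [← hdiff, hAB, sub_self]
  have hg0 := sum_lexNN_eq_zero hglex hsum0
  have hD0 : ∀ k (hk : k < r), D k = 0 := fun k hk =>
    one_sub_X_pow_mul_eq_zero (hg0 k hk)
  -- regularity
  constructor
  · rw [RingTheory.Sequence.isWeaklyRegular_iff]
    intro i hi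
    rw [List.length_ofFn] at hi
    have hN : (Ideal.ofList ((List.ofFn Z).take i) • ⊤ : Submodule R R) = Ival i := by
      rw [smul_eq_mul, Ideal.mul_top]
    have hgi : (List.ofFn Z)[i]'(by simp [hi]) = Z ⟨i, hi⟩ := by simp
    rw [hgi, hN]
    intro a b hab
    obtain ⟨x, rfl⟩ := Submodule.Quotient.mk_surjective _ a
    obtain ⟨y, rfl⟩ := Submodule.Quotient.mk_surjective _ b
    have hab' : Submodule.Quotient.mk (p := (Ival i : Submodule R R)) (Z ⟨i, hi⟩ • x)
        = Submodule.Quotient.mk (Z ⟨i, hi⟩ • y) := by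
      rw [Submodule.Quotient.mk_smul, Submodule.Quotient.mk_smul]
      exact hab
    rw [Submodule.Quotient.eq] at hab'
    rw [Submodule.Quotient.eq]
    have hmem : Z ⟨i, hi⟩ * (x - y) ∈ Ival i := by
      have hxy : Z ⟨i, hi⟩ • x - Z ⟨i, hi⟩ • y = Z ⟨i, hi⟩ * (x - y) := by
        rw [smul_eq_mul, smul_eq_mul]; ring
      rwa [hxy] at hab'
    exact hreg i hi (hD0 i hi) (x - y) hmem
  · intro htop
    rw [smul_eq_mul, Ideal.mul_top] at htop
    have h1mem : (1 : R) ∈ Ideal.ofList (List.ofFn Z) := htop ▸ Submodule.mem_top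
    have hofl : Ideal.ofList (List.ofFn Z) = Ideal.span (Set.range Z) := by
      have h : {a : R | a ∈ List.ofFn Z} = Set.range Z := by
        ext x
        simp [List.mem_ofFn]
      show Ideal.span {a : R | a ∈ List.ofFn Z} = Ideal.span (Set.range Z)
      rw [h]
    rw [hofl] at h1mem
    have hker : Ideal.span (Set.range Z) ≤ RingHom.ker (GradedRing.projZeroRingHom 𝒜) := by
      rw [Ideal.span_le]
      rintro x ⟨j, rfl⟩
      rw [SetLike.mem_coe, RingHom.mem_ker, GradedRing.projZeroRingHom_apply]
      rw [DirectSum.decompose_of_mem_ne 𝒜 (hZ1 j) (by omega)]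
    have := hker h1mem
    rw [RingHom.mem_ker, map_one] at this
    exact one_ne_zero this
end

section
/- Let $K \subseteq \mathbb{R}^r$ be a full-dimensional pointed rational polyhedral cone with generators $e_1,\dots,e_d$ and a triangulation $T$ into maximal simplicial cones. For $n \in \mathbb{Z}^r$ and all sufficiently small $\epsilon > 0$, the point $n + \epsilon \xi$ (for fixed $\xi \in \mathrm{int}(K)$) lies in some maximal cone of $T$ if and only if $n \in K$; and $n - \epsilon\xi$ lies in some maximal cone of $T$ if and only if $n \in \mathrm{int}(K)$. -/
open Finset

lemma coneOn_add {r d : ℕ} (e : Fin d → (Fin r → ℝ)) {I : Finset (Fin d)} {x y : Fin r → ℝ}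
    (hx : x ∈ coneOn e I) (hy : y ∈ coneOn e I) : x + y ∈ coneOn e I := by
  obtain ⟨c, hc, rfl⟩ := hx
  obtain ⟨c', hc', rfl⟩ := hy
  exact ⟨c + c', fun i => add_nonneg (hc i) (hc' i), by
    simp [add_smul, Finset.sum_add_distrib]⟩

lemma coneOn_smul {r d : ℕ} (e : Fin d → (Fin r → ℝ)) {I : Finset (Fin d)} {x : Fin r → ℝ}
    {ε : ℝ} (hε : 0 ≤ ε) (hx : x ∈ coneOn e I) : ε • x ∈ coneOn e I := by
  obtain ⟨c, hc, rfl⟩ := hx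
  exact ⟨ε • c, fun i => mul_nonneg hε (hc i), by
    simp [Finset.smul_sum, smul_smul]⟩

lemma coneOn_isClosed {r d : ℕ} (e : Fin d → (Fin r → ℝ)) {I : Finset (Fin d)}
    (hli : LinearIndependent ℝ (fun i : I => e i)) : IsClosed (coneOn e I) := by
  classical
  set L : (↥I → ℝ) →ₗ[ℝ] (Fin r → ℝ) :=
    Fintype.linearCombination ℝ (fun i : I => e i) with hL
  have hLapp : ∀ c : ↥I → ℝ, L c = ∑ i : ↥I, c i • e i := fun c =>
    rfl
  have hinj : Function.Injective L := by
    rw [← LinearMap.ker_eq_bot, LinearMap.ker_eq_bot']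
    intro c hc
    have := Fintype.linearIndependent_iff.mp hli c (by rw [← hLapp]; exact hc)
    funext i; exact this i
  have himg : coneOn e I = L '' {c : ↥I → ℝ | ∀ i, 0 ≤ c i} := by
    ext x
    constructor
    · rintro ⟨c, hc, rfl⟩
      refine ⟨fun i => c i, fun i => hc i, ?_⟩
      rw [hLapp]
      exact (Finset.sum_attach I fun i => c i • e i)
    · rintro ⟨c, hc, rfl⟩
      refine ⟨fun i => if h : i ∈ I then c ⟨i, h⟩ else 0, fun i => ?_, ?_⟩
      · by_cases h : i ∈ I <;> simp [h]; exact hc ⟨i, h⟩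
      · rw [hLapp, ← Finset.sum_attach I fun i => _ • e i]
        apply Finset.sum_congr rfl
        intro i _
        simp [i.2]
  rw [himg]
  have hcl : IsClosed {c : ↥I → ℝ | ∀ i, 0 ≤ c i} := by
    have : {c : ↥I → ℝ | ∀ i, 0 ≤ c i} = ⋂ i, {c | 0 ≤ c i} := by
      ext c; simp [Set.mem_iInter]
    rw [this]
    exact isClosed_iInter fun i => isClosed_le continuous_const (continuous_apply i)
  exact (L.isClosedEmbedding_of_injective (LinearMap.ker_eq_bot.mpr hinj)).isClosedMap _ hcl

lemma add_interior_mem' {r : ℕ} {K : Set (Fin r → ℝ)}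
    (hadd : ∀ x ∈ K, ∀ y ∈ K, x + y ∈ K)
    {x y : Fin r → ℝ} (hx : x ∈ K) (hy : y ∈ interior K) : x + y ∈ interior K := by
  have hopen : IsOpen ((x + ·) '' interior K) := (isOpenMap_add_left x) _ isOpen_interior
  have hsub : (x + ·) '' interior K ⊆ K := by
    rintro _ ⟨z, hz, rfl⟩; exact hadd x hx z (interior_subset hz)
  exact interior_maximal hsub hopen ⟨y, hy, rfl⟩

open Pointwise in
lemma smul_interior_mem' {r : ℕ} {K : Set (Fin r → ℝ)}
    (hsmul : ∀ ε : ℝ, 0 ≤ ε → ∀ x ∈ K, ε • x ∈ K)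
    {ε : ℝ} (hε : 0 < ε) {x : Fin r → ℝ} (hx : x ∈ interior K) :
    ε • x ∈ interior K := by
  have h1 : ε • x ∈ interior (ε • K) := by
    rw [interior_smul₀ hε.ne' K]
    exact Set.smul_mem_smul_set hx
  refine interior_mono (fun y hy => ?_) h1
  obtain ⟨z, hz, rfl⟩ := hy
  exact hsmul ε hε.le z hz


/-- for a full-dimensional pointed rational polyhedral cone `K ⊆ ℝ^r`
triangulated by maximal simplicial cones on its generators, a fixed interior vector `ξ`,
and any lattice point `n`, for all sufficiently small `ε > 0`: the point `n + ε ξ` lies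
in some maximal cone of `T` iff `n ∈ K`, and `n - ε ξ` lies in some maximal cone of `T`
iff `n ∈ int K`. -/
theorem stmt19 (r d : ℕ) (eZ : Fin d → (Fin r → ℤ)) (K : Set (Fin r → ℝ))
    (e : Fin d → (Fin r → ℝ)) (he : e = fun i => toR (eZ i))
    (hK : K = coneOn e Finset.univ)
    (hpointed : K ∩ (-K) = {0})
    (hfull : Submodule.span ℝ K = ⊤)
    (T : Finset (Finset (Fin d))) (hT : IsTriangulation e K T)
    (ξ : Fin r → ℝ) (hξ : ξ ∈ interior K) :
    ∀ n : Fin r → ℤ, ∃ ε₀ > (0:ℝ), ∀ ε : ℝ, 0 < ε → ε < ε₀ →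
      ((∃ I ∈ T, toR n + ε • ξ ∈ coneOn e I) ↔ toR n ∈ K) ∧
      ((∃ I ∈ T, toR n - ε • ξ ∈ coneOn e I) ↔ toR n ∈ interior K) := by
  classical
  have hmem : ∀ x, (∃ I ∈ T, x ∈ coneOn e I) ↔ x ∈ K := by
    intro x
    rw [← hT.2.1]
    simp
  have hadd : ∀ x ∈ K, ∀ y ∈ K, x + y ∈ K := by
    intro x hx y hy
    rw [hK] at hx hy ⊢
    exact coneOn_add e hx hy
  have hsmul : ∀ ε : ℝ, 0 ≤ ε → ∀ x ∈ K, ε • x ∈ K := by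
    intro ε hε x hx
    rw [hK] at hx ⊢
    exact coneOn_smul e hε hx
  have hclosed : IsClosed K := by
    rw [← hT.2.1]
    exact Set.Finite.isClosed_biUnion (T.finite_toSet)
      (fun I hI => coneOn_isClosed e (hT.1 I hI).2)
  have hξK : ξ ∈ K := interior_subset hξ
  intro n
  set v := toR n with hv
  have key : ∀ δ > (0:ℝ), ∀ ε : ℝ, 0 < ε → ε < δ / (‖ξ‖ + 1) → ‖ε • ξ‖ < δ := by
    intro δ hδ ε hε hε'
    rw [norm_smul, Real.norm_of_nonneg hε.le]
    have h1 : (0:ℝ) < ‖ξ‖ + 1 := by positivity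
    calc ε * ‖ξ‖ ≤ ε * (‖ξ‖ + 1) := by nlinarith [norm_nonneg ξ]
      _ < δ / (‖ξ‖ + 1) * (‖ξ‖ + 1) := by nlinarith
      _ = δ := by field_simp
  by_cases hvK : v ∈ K
  · by_cases hvint : v ∈ interior K
    · obtain ⟨δ, hδ, hball⟩ := Metric.isOpen_iff.mp isOpen_interior v hvint
      refine ⟨δ / (‖ξ‖ + 1), by positivity, fun ε hε hε' => ?_⟩
      constructor
      · rw [hmem]
        exact iff_of_true (hadd v hvK _ (hsmul ε hε.le ξ hξK)) hvK
      · rw [hmem]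
        refine iff_of_true (interior_subset (hball ?_)) hvint
        rw [Metric.mem_ball, dist_eq_norm]
        simpa using key δ hδ ε hε hε'
    · refine ⟨1, one_pos, fun ε hε _ => ?_⟩
      constructor
      · rw [hmem]
        exact iff_of_true (hadd v hvK _ (hsmul ε hε.le ξ hξK)) hvK
      · rw [hmem]
        refine iff_of_false (fun habs => hvint ?_) hvint
        have : v - ε • ξ + ε • ξ ∈ interior K :=
          add_interior_mem' hadd habs (smul_interior_mem' hsmul hε hξ)
        simpa using this
  · have hvint : v ∉ interior K := fun h => hvK (interior_subset h)
    obtain ⟨δ, hδ, hball⟩ := Metric.isOpen_iff.mp hclosed.isOpen_compl v hvK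
    refine ⟨δ / (‖ξ‖ + 1), by positivity, fun ε hε hε' => ?_⟩
    constructor
    · rw [hmem]
      refine iff_of_false (fun habs => ?_) hvK
      refine hball ?_ habs
      rw [Metric.mem_ball, dist_eq_norm]
      simpa using key δ hδ ε hε hε'
    · rw [hmem]
      refine iff_of_false (fun habs => ?_) hvint
      refine hball ?_ habs
      rw [Metric.mem_ball, dist_eq_norm]
      simpa using key δ hδ ε hε hε'
end
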